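/- arXiv:math-ph/0407073 — 4 statements merged into one kernel-verified Lean document; each statement's English description precedes it below -/
import Mathlib

section
/- Uniqueness of limit trajectories after a meeting time: If x₁ and x₂ are limit trajectories (with initial points a₁ and a₂ respectively) and x₁(t*) = x₂(t*) for some t* ≥ 0, then x₁(t) = x₂(t) for all t ≥ t*. -/
open Filter Topology RealInnerProductSpace

noncomputable section

/-- The translation vector in `ℝ^d` corresponding to an integer vector `z ∈ ℤ^d`. -/
def intVec {d : ℕ} (z : Fin d → ℤ) : EuclideanSpace ℝ (Fin d) :=
  (WithLp.equiv 2 (Fin d → ℝ)).symm (fun i => (z i : ℝ))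

/-- `ℤ^d`-periodicity in the space variable. -/
def IsSpacePeriodic {d : ℕ} (f : EuclideanSpace ℝ (Fin d) → ℝ → ℝ) : Prop :=
  ∀ (z : Fin d → ℤ) (x : EuclideanSpace ℝ (Fin d)) (t : ℝ), f (x + intVec z) t = f x t

/-- The spatial Laplacian `Δ_x f` of `f(x,t)`. -/
def spatialLaplacian {d : ℕ} (f : EuclideanSpace ℝ (Fin d) → ℝ → ℝ)
    (x : EuclideanSpace ℝ (Fin d)) (t : ℝ) : ℝ :=
  ∑ i : Fin d,
    iteratedFDeriv ℝ 2 (fun y => f y t) x ![EuclideanSpace.single i 1, EuclideanSpace.single i 1]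

/-- The viscous potential Burgers (Hamilton–Jacobi) equation
`∂_t ψ + |∇_x ψ|²/2 + U = ν Δ_x ψ` on `ℝ^d × [0,∞)`. -/
def SatisfiesBurgers {d : ℕ} (ν : ℝ) (ψ U : EuclideanSpace ℝ (Fin d) → ℝ → ℝ) : Prop :=
  ∀ x t, 0 ≤ t →
    deriv (fun s => ψ x s) t + ‖gradient (fun y => ψ y t) x‖ ^ 2 / 2 + U x t
      = ν * spatialLaplacian ψ x t

/-- `y` is the trajectory of the velocity field `∇_x ψ` starting at `a`. -/
def IsTrajectory {d : ℕ} (ψ : EuclideanSpace ℝ (Fin d) → ℝ → ℝ)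
    (a : EuclideanSpace ℝ (Fin d)) (y : ℝ → EuclideanSpace ℝ (Fin d)) : Prop :=
  y 0 = a ∧ ∀ t, 0 ≤ t → HasDerivAt y (gradient (fun x => ψ x t) (y t)) t

/-- All data of the vanishing-viscosity potential Burgers problem: a smooth periodic force
potential `U`, a smooth periodic initial condition `φ₀`, for every `ν > 0` a smooth periodic
solution `ψ ν` of the viscous equation, the pointwise limit potential `φ`, and for every
`ν > 0` and initial point `a` the trajectory `y ν a` of `∇_x (ψ ν)`. -/
structure BurgersData (d : ℕ) where
  hd : 1 ≤ d
  U : EuclideanSpace ℝ (Fin d) → ℝ → ℝ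
  φ₀ : EuclideanSpace ℝ (Fin d) → ℝ
  ψ : ℝ → EuclideanSpace ℝ (Fin d) → ℝ → ℝ
  φ : EuclideanSpace ℝ (Fin d) → ℝ → ℝ
  y : ℝ → EuclideanSpace ℝ (Fin d) → ℝ → EuclideanSpace ℝ (Fin d)
  hU_smooth : ContDiff ℝ (⊤ : ℕ∞) (Function.uncurry U)
  hU_per : IsSpacePeriodic U
  hφ₀_smooth : ContDiff ℝ (⊤ : ℕ∞) φ₀
  hφ₀_per : ∀ (z : Fin d → ℤ) (x : EuclideanSpace ℝ (Fin d)), φ₀ (x + intVec z) = φ₀ x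
  hψ_smooth : ∀ ν, 0 < ν → ContDiff ℝ (⊤ : ℕ∞) (Function.uncurry (ψ ν))
  hψ_per : ∀ ν, 0 < ν → IsSpacePeriodic (ψ ν)
  hψ_eq : ∀ ν, 0 < ν → SatisfiesBurgers ν (ψ ν) U
  hψ_init : ∀ ν, 0 < ν → ∀ x, ψ ν x 0 = φ₀ x
  hφ_lim : ∀ x t, 0 ≤ t → Tendsto (fun ν => ψ ν x t) (𝓝[>] 0) (𝓝 (φ x t))
  hy : ∀ ν, 0 < ν → ∀ a, IsTrajectory (ψ ν) a (y ν a)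

/-- `x` is a limit trajectory with initial point `a`: the pointwise limit as `ν → 0⁺` of the
viscous trajectories `y^ν_a`. -/
def IsLimitTrajectory {d : ℕ} (B : BurgersData d) (a : EuclideanSpace ℝ (Fin d))
    (x : ℝ → EuclideanSpace ℝ (Fin d)) : Prop :=
  ∀ t, 0 ≤ t → Tendsto (fun ν => B.y ν a t) (𝓝[>] 0) (𝓝 (x t))

section Aux

variable {G : Type*} [NormedAddCommGroup G] [NormedSpace ℝ G]

/-- Directional derivative operator. -/
def pdv (w : G) (f : G → ℝ) : G → ℝ := fun z => fderiv ℝ f z w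

lemma pdv_contDiff {f : G → ℝ} (hf : ContDiff ℝ (⊤ : ℕ∞) f) (w : G) : ContDiff ℝ (⊤ : ℕ∞) (pdv w f) := by
  have h1 : ContDiff ℝ (⊤ : ℕ∞) (fderiv ℝ f) := hf.fderiv_right (by simp)
  exact (ContinuousLinearMap.apply ℝ ℝ w).contDiff.comp h1

lemma pdv_fderiv_apply {f : G → ℝ} (hf : ContDiff ℝ (⊤ : ℕ∞) f) (w v z : G) :
    fderiv ℝ (pdv w f) z v = fderiv ℝ (fderiv ℝ f) z v w := by
  have h1 : ContDiff ℝ (⊤ : ℕ∞) (fderiv ℝ f) := hf.fderiv_right (by simp)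
  have h2 : HasFDerivAt (fderiv ℝ f) (fderiv ℝ (fderiv ℝ f) z) z :=
    (h1.differentiable (by simp) z).hasFDerivAt
  have h3 : HasFDerivAt (pdv w f)
      (((ContinuousLinearMap.apply ℝ ℝ w)).comp (fderiv ℝ (fderiv ℝ f) z)) z :=
    ((ContinuousLinearMap.apply ℝ ℝ w).hasFDerivAt).comp z h2
  rw [h3.fderiv]; rfl

lemma pdv_comm {f : G → ℝ} (hf : ContDiff ℝ (⊤ : ℕ∞) f) (v w : G) :
    pdv v (pdv w f) = pdv w (pdv v f) := by
  funext z
  show fderiv ℝ (pdv w f) z v = fderiv ℝ (pdv v f) z w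
  rw [pdv_fderiv_apply hf, pdv_fderiv_apply hf]
  exact second_derivative_symmetric (fun y => (hf.differentiable (by simp) y).hasFDerivAt)
    ((hf.fderiv_right (m := (⊤ : ℕ∞)) (by simp)).differentiable (by simp) z).hasFDerivAt v w

lemma pdv_const_mul {f : G → ℝ} (hf : Differentiable ℝ f) (c : ℝ) (w : G) :
    pdv w (fun z => c * f z) = fun z => c * pdv w f z := by
  funext z; show fderiv ℝ (fun z => c * f z) z w = _
  rw [fderiv_const_mul (hf z) c]; rfl

lemma pdv_sum {ι : Type*} (s : Finset ι) {f : ι → G → ℝ} (hf : ∀ i, Differentiable ℝ (f i))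
    (w : G) : pdv w (fun z => ∑ i ∈ s, f i z) = fun z => ∑ i ∈ s, pdv w (f i) z := by
  funext z; show fderiv ℝ (fun z => ∑ i ∈ s, f i z) z w = _
  rw [fderiv_fun_sum (fun i _ => (hf i z))]; simp [pdv]

lemma pdv_mul {f g : G → ℝ} (hf : Differentiable ℝ f) (hg : Differentiable ℝ g) (w : G) :
    pdv w (fun z => f z * g z) = fun z => f z * pdv w g z + pdv w f z * g z := by
  funext z; show fderiv ℝ (fun z => f z * g z) z w = _
  rw [fderiv_fun_mul (hf z) (hg z)]; simp [pdv]; ring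

lemma pdv_sub {f g : G → ℝ} (hf : Differentiable ℝ f) (hg : Differentiable ℝ g) (w : G) :
    pdv w (fun z => f z - g z) = fun z => pdv w f z - pdv w g z := by
  funext z; show fderiv ℝ (fun z => f z - g z) z w = _
  rw [fderiv_fun_sub (hf z) (hg z)]; rfl

lemma pdv_div_const {f : G → ℝ} (hf : Differentiable ℝ f) (c : ℝ) (w : G) :
    pdv w (fun z => f z / c) = fun z => pdv w f z / c := by
  have h1 : (fun z => f z / c) = fun z => c⁻¹ * f z := by funext z; rw [div_eq_inv_mul]
  rw [h1, pdv_const_mul hf]; funext z; rw [div_eq_inv_mul]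

lemma pdv_sq {f : G → ℝ} (hf : Differentiable ℝ f) (w : G) :
    pdv w (fun z => (f z) ^ 2) = fun z => 2 * f z * pdv w f z := by
  have : (fun z => (f z) ^ 2) = fun z => f z * f z := by funext z; ring
  rw [this, pdv_mul hf hf]; funext z; ring

lemma pdv_smul_dir (c : ℝ) (w : G) (f : G → ℝ) :
    pdv (c • w) f = fun z => c * pdv w f z := by
  funext z; show fderiv ℝ f z (c • w) = _
  rw [map_smul]; rfl

lemma fderiv_translate {H : Type*} [NormedAddCommGroup H] [NormedSpace ℝ H]
    (f : G → H) (hf : Differentiable ℝ f) (c z : G) :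
    fderiv ℝ (fun y => f (y + c)) z = fderiv ℝ f (z + c) := by
  have h : HasFDerivAt (fun y => f (y + c)) (fderiv ℝ f (z + c)) z := by
    have := (hf (z + c)).hasFDerivAt.comp z ((hasFDerivAt_id z).add_const c)
    simpa [Function.comp_def] using this
  exact h.fderiv

lemma pdv_periodic {f : G → ℝ} (hf : Differentiable ℝ f) {c : G}
    (hper : ∀ z, f (z + c) = f z) (w : G) : ∀ z, pdv w f (z + c) = pdv w f z := by
  intro z
  show fderiv ℝ f (z + c) w = fderiv ℝ f z w
  rw [← fderiv_translate f hf c z]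
  congr 1
  exact congrArg (fun g => fderiv ℝ g z) (funext hper)

section Slice
variable {F : G × ℝ → ℝ}

lemma contDiff_slice (hF : ContDiff ℝ (⊤ : ℕ∞) F) (t : ℝ) :
    ContDiff ℝ (⊤ : ℕ∞) (fun y => F (y, t)) := hF.comp (contDiff_id.prodMk contDiff_const)

lemma fderiv_slice (hF : Differentiable ℝ F) (t : ℝ) (x : G) (v : G) :
    fderiv ℝ (fun y => F (y, t)) x v = fderiv ℝ F (x, t) (v, 0) := by
  have h : HasFDerivAt (fun y => F (y, t))
      ((fderiv ℝ F (x, t)).comp ((ContinuousLinearMap.id ℝ G).prod 0)) x := by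
    exact (hF (x, t)).hasFDerivAt.comp x ((hasFDerivAt_id x).prodMk (hasFDerivAt_const t x))
  rw [h.fderiv]; rfl

lemma pdv_slice (hF : Differentiable ℝ F) (t : ℝ) (v : G) :
    pdv v (fun y => F (y, t)) = fun x => pdv ((v, 0) : G × ℝ) F (x, t) := by
  funext x; exact fderiv_slice hF t x v

lemma deriv_slice (hF : Differentiable ℝ F) (x : G) (t : ℝ) :
    deriv (fun s => F (x, s)) t = fderiv ℝ F (x, t) (0, 1) := by
  have h : HasDerivAt (fun s => F (x, s)) (fderiv ℝ F (x, t) (0, 1)) t := by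
    have hin : HasDerivAt (fun s : ℝ => ((x, s) : G × ℝ)) ((0 : G), (1 : ℝ)) t :=
      (hasDerivAt_const t x).prodMk (hasDerivAt_id t)
    exact (hF (x, t)).hasFDerivAt.comp_hasDerivAt t hin
  exact h.deriv
end Slice

/-- derivative at a right endpoint of a max is nonneg -/
lemma deriv_nonneg_of_isMaxOn_right {u : ℝ → ℝ} {c a b : ℝ} (hab : a < b)
    (hu : HasDerivAt u c b) (hmax : ∀ s ∈ Set.Icc a b, u s ≤ u b) : 0 ≤ c := by
  have h1 : Tendsto (slope u b) (𝓝[≠] b) (𝓝 c) := hasDerivAt_iff_tendsto_slope.1 hu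
  have h2 : Tendsto (slope u b) (𝓝[<] b) (𝓝 c) :=
    h1.mono_left (nhdsWithin_mono _ (fun s hs => ne_of_lt hs))
  refine ge_of_tendsto h2 ?_
  filter_upwards [Ioo_mem_nhdsLT hab] with s hs
  have hsb : s < b := hs.2
  have : u s ≤ u b := hmax s ⟨le_of_lt hs.1, le_of_lt hsb⟩
  have hslope : slope u b s = (u s - u b) / (s - b) := slope_def_field u b s
  rw [hslope, div_nonneg_iff]
  right
  constructor <;> linarith

/-- second derivative at an interior local max is nonpositive (1D). -/
lemma second_deriv_nonpos_of_isLocalMax {u u' : ℝ → ℝ} {c : ℝ}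
    (hu : ∀ s, HasDerivAt u (u' s) s) (hu' : HasDerivAt u' c 0)
    (hmax : IsLocalMax u 0) : c ≤ 0 := by
  by_contra hc
  push_neg at hc
  have hu'0 : u' 0 = 0 := by
    have := hmax.deriv_eq_zero
    rwa [(hu 0).deriv] at this
  -- slopes of u' near 0 are close to c
  have h1 : Tendsto (slope u' 0) (𝓝[≠] 0) (𝓝 c) := hasDerivAt_iff_tendsto_slope.1 hu'
  have h2 : Tendsto (slope u' 0) (𝓝[>] 0) (𝓝 c) :=
    h1.mono_left (nhdsWithin_mono _ (fun s hs => ne_of_gt hs))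
  have h3 : ∀ᶠ s in 𝓝[>] (0:ℝ), 0 < slope u' 0 s :=
    h2.eventually (eventually_gt_nhds hc)
  have h4 : ∀ᶠ s in 𝓝[>] (0:ℝ), 0 < u' s := by
    filter_upwards [h3, self_mem_nhdsWithin] with s hs hs'
    have : slope u' 0 s = u' s / s := by
      rw [slope_def_field]; simp [hu'0]
    rw [this] at hs
    have hs0 : (0:ℝ) < s := hs'
    have : u' s = (u' s / s) * s := (div_mul_cancel₀ _ (ne_of_gt hs0)).symm
    rw [this]
    exact mul_pos hs hs0
  obtain ⟨δ, hδ, hδ'⟩ := (mem_nhdsGT_iff_exists_Ioo_subset).1 h4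
  -- also local max gives a neighborhood
  obtain ⟨ε, hε, hε'⟩ := Metric.mem_nhds_iff.1 hmax
  have hδ0 : (0:ℝ) < δ := hδ
  set η := min δ ε / 2 with hη
  have hη0 : 0 < η := by positivity
  have hmono : StrictMonoOn u (Set.Icc 0 η) := by
    apply strictMonoOn_of_deriv_pos (convex_Icc 0 η)
    · exact fun s _ => (hu s).continuousAt.continuousWithinAt
    · intro s hs
      rw [interior_Icc] at hs
      rw [(hu s).deriv]
      apply hδ'
      constructor
      · exact hs.1
      · calc s < η := hs.2
          _ < δ := by
            have : η ≤ δ / 2 := by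
              rw [hη]; apply div_le_div_of_nonneg_right _ (by norm_num)
              exact min_le_left _ _
            linarith
  have h5 : u 0 < u η := hmono (by constructor <;> simp [le_of_lt hη0]) (by
      constructor <;> simp [le_of_lt hη0]) hη0
  have h6 : u η ≤ u 0 := by
    apply hε'
    rw [Metric.mem_ball, Real.dist_eq, sub_zero, abs_of_pos hη0]
    calc η ≤ ε / 2 := by
          rw [hη]; apply div_le_div_of_nonneg_right _ (by norm_num); exact min_le_right _ _
      _ < ε := by linarith
  linarith

lemma intVec_apply {d : ℕ} (z : Fin d → ℤ) (i : Fin d) : intVec z i = (z i : ℝ) := rfl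

lemma exists_periodic_max {d : ℕ} (h : EuclideanSpace ℝ (Fin d) × ℝ → ℝ) (hc : Continuous h)
    (hper : ∀ (z : Fin d → ℤ) (x : EuclideanSpace ℝ (Fin d)) (t : ℝ), h (x + intVec z, t) = h (x, t))
    {t₁ : ℝ} (ht₁ : 0 ≤ t₁) :
    ∃ p : EuclideanSpace ℝ (Fin d) × ℝ, p.2 ∈ Set.Icc 0 t₁ ∧
      ∀ x t, t ∈ Set.Icc 0 t₁ → h (x, t) ≤ h p := by
  classical
  set eqv := PiLp.continuousLinearEquiv 2 ℝ (fun _ : Fin d => ℝ) with heqv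
  set Q : Set (EuclideanSpace ℝ (Fin d)) :=
    eqv.symm '' (Set.univ.pi fun _ => Set.Icc (0:ℝ) 1) with hQ
  have hQc : IsCompact Q :=
    (isCompact_univ_pi fun _ => isCompact_Icc).image eqv.symm.continuous
  have hSc : IsCompact (Q ×ˢ Set.Icc 0 t₁) := hQc.prod isCompact_Icc
  have hSne : (Q ×ˢ Set.Icc 0 t₁).Nonempty := by
    refine ⟨(eqv.symm (fun _ => 0), 0), ⟨⟨(fun _ => 0), ?_, rfl⟩, by simp [ht₁]⟩⟩
    intro i _; exact ⟨le_refl 0, by norm_num⟩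
  obtain ⟨p, hpS, hpmax⟩ := hSc.exists_isMaxOn hSne hc.continuousOn
  refine ⟨p, hpS.2, ?_⟩
  intro x t ht
  set z : Fin d → ℤ := fun i => ⌊x i⌋ with hz
  set c : EuclideanSpace ℝ (Fin d) := eqv.symm (fun i => Int.fract (x i)) with hcdef
  have hcx : c + intVec z = x := by
    apply PiLp.ext
    intro i
    have h1 : (c + intVec z) i = c i + intVec z i := rfl
    rw [h1, intVec_apply]
    have h2 : c i = Int.fract (x i) := rfl
    rw [h2, hz]
    exact Int.fract_add_floor (x i)
  have hcQ : c ∈ Q := by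
    refine ⟨(fun i => Int.fract (x i)), ?_, rfl⟩
    intro i _
    exact ⟨Int.fract_nonneg _, le_of_lt (Int.fract_lt_one _)⟩
  have : h (x, t) = h (c, t) := by rw [← hcx, hper]
  rw [this]
  exact hpmax ⟨hcQ, ht⟩

lemma fderiv_periodic_translate {d : ℕ} {H : Type*} [NormedAddCommGroup H] [NormedSpace ℝ H]
    (F : EuclideanSpace ℝ (Fin d) × ℝ → H) (hF : Differentiable ℝ F)
    (hper : ∀ (z : Fin d → ℤ) x t, F (x + intVec z, t) = F (x, t)) :
    ∀ (z : Fin d → ℤ) x t, fderiv ℝ F (x + intVec z, t) = fderiv ℝ F (x, t) := by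
  intro z x t
  have key : ∀ p : EuclideanSpace ℝ (Fin d) × ℝ, F (p + (intVec z, 0)) = F p := by
    intro p
    have : p + (intVec z, 0) = (p.1 + intVec z, p.2) := by rw [Prod.ext_iff]; simp
    rw [this, hper]
  have h1 : HasFDerivAt (fun p => F (p + (intVec z, 0))) (fderiv ℝ F ((x, t) + (intVec z, 0))) (x, t) := by
    have := (hF ((x,t) + (intVec z, 0))).hasFDerivAt.comp (x,t)
      ((hasFDerivAt_id ((x,t) : EuclideanSpace ℝ (Fin d) × ℝ)).add_const (intVec z, 0))
    simpa [Function.comp_def] using this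
  have h2 : (fun p => F (p + (intVec z, 0))) = F := funext key
  rw [h2] at h1
  have h3 := h1.fderiv
  have h4 : ((x, t) : EuclideanSpace ℝ (Fin d) × ℝ) + (intVec z, 0) = (x + intVec z, t) := by rw [Prod.ext_iff]; simp
  rw [h4] at h3
  rw [h3]

lemma hasDerivAt_line {h : G → ℝ} (hh : Differentiable ℝ h) (x₀ v : G) (s : ℝ) :
    HasDerivAt (fun s : ℝ => h (x₀ + s • v)) (pdv v h (x₀ + s • v)) s := by
  have hin : HasDerivAt (fun s : ℝ => x₀ + s • v) v s := by
    simpa using ((hasDerivAt_id s).smul_const v).const_add x₀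
  exact (hh (x₀ + s • v)).hasFDerivAt.comp_hasDerivAt s hin

lemma pdv_eq_zero_at_max {h : G → ℝ} {x₀ : G} (hmax : ∀ x, h x ≤ h x₀) (v : G) :
    pdv v h x₀ = 0 := by
  have : IsLocalMax h x₀ := Filter.Eventually.of_forall fun x => hmax x
  show fderiv ℝ h x₀ v = 0
  rw [this.fderiv_eq_zero]; rfl

lemma pdv2_nonpos_at_max {h : G → ℝ} (hh : ContDiff ℝ (⊤ : ℕ∞) h) {x₀ : G}
    (hmax : ∀ x, h x ≤ h x₀) (v : G) : pdv v (pdv v h) x₀ ≤ 0 := by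
  have hd : Differentiable ℝ h := hh.differentiable (by simp)
  have hd2 : Differentiable ℝ (pdv v h) := (pdv_contDiff hh v).differentiable (by simp)
  have h0 : x₀ + (0:ℝ) • v = x₀ := by simp
  have key := second_deriv_nonpos_of_isLocalMax
    (u := fun s : ℝ => h (x₀ + s • v)) (u' := fun s : ℝ => pdv v h (x₀ + s • v))
    (c := pdv v (pdv v h) x₀)
    (fun s => hasDerivAt_line hd x₀ v s) ?_ ?_
  · exact key
  · have := hasDerivAt_line hd2 x₀ v 0
    rwa [h0] at this
  · apply Filter.Eventually.of_forall
    intro s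
    simp only [h0]
    exact hmax _

section MaxPrinciple

variable {d : ℕ}
local notation "E" => EuclideanSpace ℝ (Fin d)

lemma hasDerivAt_slice_t {F : E × ℝ → ℝ} (hF : Differentiable ℝ F) (x : E) (t : ℝ) :
    HasDerivAt (fun s => F (x, s)) (pdv ((0 : E), (1:ℝ)) F (x, t)) t := by
  have hin : HasDerivAt (fun s : ℝ => ((x, s) : E × ℝ)) ((0 : E), (1 : ℝ)) t :=
    (hasDerivAt_const t x).prodMk (hasDerivAt_id t)
  exact (hF (x, t)).hasFDerivAt.comp_hasDerivAt t hin

lemma eucl_decomp (e : E) (h : E → ℝ) (hh : Differentiable ℝ h) (x : E) :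
    pdv e h x = ∑ i, e i * pdv (EuclideanSpace.single i 1) h x := by
  classical
  have he : e = ∑ i, e i • EuclideanSpace.single i (1:ℝ) := by
    have h1 := (EuclideanSpace.basisFun (Fin d) ℝ).sum_repr e
    conv_lhs => rw [← h1]
    congr 1
    funext i
    rw [EuclideanSpace.basisFun_repr, EuclideanSpace.basisFun_apply]
  show fderiv ℝ h x e = _
  conv_lhs => rw [he]
  rw [map_sum]
  congr 1
  funext i
  rw [map_smul]
  rfl

lemma sum_coord_sq (e : E) (he : ‖e‖ = 1) : ∑ i, (e i) ^ 2 = 1 := by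
  have h1 : ‖e‖ = Real.sqrt (∑ i, ‖e i‖ ^ 2) := EuclideanSpace.norm_eq e
  have h2 : ∑ i, ‖e i‖ ^ 2 = ∑ i, (e i) ^ 2 := by
    congr 1; funext i; rw [Real.norm_eq_abs, sq_abs]
  have h3 : (0:ℝ) ≤ ∑ i, (e i) ^ 2 := Finset.sum_nonneg fun i _ => sq_nonneg _
  have := congrArg (fun r : ℝ => r ^ 2) h1
  simp only [he] at this
  rw [h2, Real.sq_sqrt (h2 ▸ (by positivity : (0:ℝ) ≤ ∑ i, ‖e i‖ ^ 2))] at this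
  linarith [this]

set_option maxHeartbeats 1000000 in
theorem max_principle (Ψ Uu : E × ℝ → ℝ) (ν : ℝ) (hν : 0 < ν)
    (hΨ : ContDiff ℝ (⊤ : ℕ∞) Ψ) (hUu : ContDiff ℝ (⊤ : ℕ∞) Uu)
    (hper : ∀ (z : Fin d → ℤ) (x : E) (t : ℝ), Ψ (x + intVec z, t) = Ψ (x, t))
    (heq : ∀ (t : ℝ), 0 ≤ t → ∀ (x : E),
      pdv ((0 : E), (1:ℝ)) Ψ (x, t)
        = ν * (∑ i, pdv ((EuclideanSpace.single i 1 : E), (0:ℝ))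
              (pdv ((EuclideanSpace.single i 1 : E), (0:ℝ)) Ψ) (x, t))
          - (∑ i, (pdv ((EuclideanSpace.single i 1 : E), (0:ℝ)) Ψ (x, t)) ^ 2) / 2 - Uu (x, t))
    (K T : ℝ) (hK : 0 ≤ K) (hT : 0 ≤ T)
    (hinit : ∀ (x : E) (e : E), ‖e‖ = 1 → pdv ((e,(0:ℝ))) (pdv ((e,(0:ℝ))) Ψ) (x, 0) ≤ K)
    (hKU : ∀ (x : E) (t : ℝ) (e : E), ‖e‖ = 1 → t ∈ Set.Icc 0 T →
      -(pdv ((e,(0:ℝ))) (pdv ((e,(0:ℝ))) Uu) (x, t)) ≤ K ^ 2) :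
    ∀ (x : E) (t : ℝ) (e : E), ‖e‖ = 1 → t ∈ Set.Icc 0 T →
      pdv ((e,(0:ℝ))) (pdv ((e,(0:ℝ))) Ψ) (x, t) ≤ K := by
  intro x₁ t₁ e he ht₁
  by_contra hcon
  push_neg at hcon
  set e' : E × ℝ := (e, (0:ℝ)) with he'
  set g : E × ℝ → ℝ := pdv e' (pdv e' Ψ) with hg
  have hgsm : ContDiff ℝ (⊤ : ℕ∞) g := pdv_contDiff (pdv_contDiff hΨ e') e'
  have hΨd : Differentiable ℝ Ψ := hΨ.differentiable (by simp)
  have hpdΨd : Differentiable ℝ (pdv e' Ψ) := (pdv_contDiff hΨ e').differentiable (by simp)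
  -- periodicity of g
  have hper1 : ∀ (z : Fin d → ℤ) (x : E) (t : ℝ), pdv e' Ψ (x + intVec z, t) = pdv e' Ψ (x, t) := by
    intro z x t
    show fderiv ℝ Ψ (x + intVec z, t) e' = fderiv ℝ Ψ (x, t) e'
    rw [fderiv_periodic_translate Ψ hΨd hper z x t]
  have hperg : ∀ (z : Fin d → ℤ) (x : E) (t : ℝ), g (x + intVec z, t) = g (x, t) := by
    intro z x t
    show fderiv ℝ (pdv e' Ψ) (x + intVec z, t) e' = fderiv ℝ (pdv e' Ψ) (x, t) e'
    rw [fderiv_periodic_translate (pdv e' Ψ) hpdΨd hper1 z x t]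
  -- t₁ > 0
  have ht₁0 : 0 < t₁ := by
    rcases eq_or_lt_of_le ht₁.1 with h | h
    · exfalso
      rw [← h] at hcon
      exact absurd (hinit x₁ e he) (not_le.2 hcon)
    · exact h
  set ε : ℝ := (g (x₁, t₁) - K) / (t₁ + 1) with hε
  have hεpos : 0 < ε := div_pos (by linarith [hcon]) (by linarith)
  set Gf : E × ℝ → ℝ := fun p => g p - ε * p.2 with hGf
  have hGfc : Continuous Gf := by
    apply Continuous.sub hgsm.continuous
    exact continuous_const.mul continuous_snd
  have hGfper : ∀ (z : Fin d → ℤ) (x : E) (t : ℝ), Gf (x + intVec z, t) = Gf (x, t) := by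
    intro z x t; simp only [hGf]; rw [hperg]
  obtain ⟨p₀, hp₀mem, hp₀max⟩ := exists_periodic_max Gf hGfc hGfper (le_of_lt ht₁0)
  set x₀ := p₀.1 with hx₀
  set t₀ := p₀.2 with ht₀
  have hp₀ : p₀ = (x₀, t₀) := rfl
  -- G value large
  have hGbig : K < Gf p₀ := by
    have h1 : Gf (x₁, t₁) ≤ Gf p₀ := hp₀max x₁ t₁ ⟨le_of_lt ht₁0, le_refl _⟩
    have h2 : K < Gf (x₁, t₁) := by
      have ht1p : (0:ℝ) < t₁ + 1 := by linarith
      have key : ε * t₁ < g (x₁, t₁) - K := by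
        rw [hε, div_mul_eq_mul_div, div_lt_iff₀ ht1p]
        nlinarith [hcon, ht₁0]
      simp only [hGf]
      linarith
    linarith
  have ht₀pos : 0 < t₀ := by
    rcases eq_or_lt_of_le hp₀mem.1 with h | h
    · exfalso
      have h1 : Gf p₀ = g (x₀, 0) := by rw [hp₀, ← h]; simp [hGf]
      have h2 : g (x₀, 0) ≤ K := hinit x₀ e he
      linarith
    · exact h
  have hgbig : K < g (x₀, t₀) := by
    have : Gf p₀ = g (x₀, t₀) - ε * t₀ := by rw [hp₀]
    nlinarith [mul_pos hεpos ht₀pos]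
  -- spatial max at x₀ of the slice of g at t₀
  have hspatial : ∀ x : E, g (x, t₀) ≤ g (x₀, t₀) := by
    intro x
    have := hp₀max x t₀ ⟨le_of_lt ht₀pos, hp₀mem.2⟩
    simp only [hGf, hp₀] at this ⊢
    linarith
  -- time derivative at t₀ is ≥ ε
  have htd : ε ≤ pdv ((0 : E), (1:ℝ)) g (x₀, t₀) := by
    have hu : HasDerivAt (fun s => Gf (x₀, s)) (pdv ((0 : E), (1:ℝ)) g (x₀, t₀) - ε) t₀ := by
      have h1 : HasDerivAt (fun s => g (x₀, s)) (pdv ((0 : E), (1:ℝ)) g (x₀, t₀)) t₀ :=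
        hasDerivAt_slice_t (hgsm.differentiable (by simp)) x₀ t₀
      have h2 : HasDerivAt (fun s : ℝ => ε * s) ε t₀ := by
        simpa using (hasDerivAt_id t₀).const_mul ε
      exact h1.sub h2
    have hmax : ∀ s ∈ Set.Icc 0 t₀, Gf (x₀, s) ≤ Gf (x₀, t₀) := by
      intro s hs
      have := hp₀max x₀ s ⟨hs.1, le_trans hs.2 hp₀mem.2⟩
      rw [hp₀] at this; exact this
    have := deriv_nonneg_of_isMaxOn_right ht₀pos hu hmax
    linarith
  -- commutation: time derivative of g equals spatial second derivative of time-derivative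
  have hcomm1 : pdv ((0 : E), (1:ℝ)) g = pdv e' (pdv e' (pdv ((0 : E), (1:ℝ)) Ψ)) := by
    rw [hg]
    rw [pdv_comm (pdv_contDiff hΨ e') ((0 : E), (1:ℝ)) e']
    congr 1
    rw [pdv_comm hΨ ((0 : E), (1:ℝ)) e']
  classical
  -- spatial slice objects at time t₀
  set sv : Fin d → E := fun i => EuclideanSpace.single i (1:ℝ) with hsv
  set f₀ : E → ℝ := fun x => Ψ (x, t₀) with hf₀def
  have hf₀ : ContDiff ℝ (⊤ : ℕ∞) f₀ := contDiff_slice hΨ t₀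
  set w₀ : E → ℝ := fun x => pdv ((0:E),(1:ℝ)) Ψ (x, t₀) with hw₀def
  have hτd : Differentiable ℝ (pdv ((0:E),(1:ℝ)) Ψ) :=
    (pdv_contDiff hΨ ((0:E),(1:ℝ))).differentiable (by simp)
  have hw₀sm : ContDiff ℝ (⊤ : ℕ∞) w₀ := contDiff_slice (pdv_contDiff hΨ ((0:E),(1:ℝ))) t₀
  have hUsl : ContDiff ℝ (⊤ : ℕ∞) (fun x : E => Uu (x, t₀)) := contDiff_slice hUu t₀
  set gsl : E → ℝ := pdv e (pdv e f₀) with hgsldef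
  have hgslsm : ContDiff ℝ (⊤ : ℕ∞) gsl := pdv_contDiff (pdv_contDiff hf₀ e) e
  -- slice identification of g
  have hsliceA : (fun x : E => pdv e' Ψ (x, t₀)) = pdv e f₀ := by
    rw [pdv_slice hΨd t₀ e]
  have hgsl : (fun x : E => g (x, t₀)) = gsl := by
    have h1 : (fun x : E => g (x, t₀)) = pdv e (fun x : E => pdv e' Ψ (x, t₀)) := by
      rw [pdv_slice hpdΨd t₀ e]
    rw [h1, hsliceA]
  have hspatial' : ∀ x : E, gsl x ≤ gsl x₀ := by
    intro x
    have h1 := hspatial x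
    rw [← congrFun hgsl x, ← congrFun hgsl x₀]
    exact h1
  -- time derivative expressed spatially
  have hslice2 : (fun x : E => pdv e' (pdv e' (pdv ((0:E),(1:ℝ)) Ψ)) (x, t₀))
      = pdv e (pdv e w₀) := by
    have hin : Differentiable ℝ (pdv e' (pdv ((0:E),(1:ℝ)) Ψ)) :=
      (pdv_contDiff (pdv_contDiff hΨ ((0:E),(1:ℝ))) e').differentiable (by simp)
    have h1 : (fun x : E => pdv e' (pdv e' (pdv ((0:E),(1:ℝ)) Ψ)) (x, t₀))
        = pdv e (fun x : E => pdv e' (pdv ((0:E),(1:ℝ)) Ψ) (x, t₀)) := by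
      rw [pdv_slice hin t₀ e]
    have h2 : (fun x : E => pdv e' (pdv ((0:E),(1:ℝ)) Ψ) (x, t₀)) = pdv e w₀ := by
      rw [pdv_slice hτd t₀ e]
    rw [h1, h2]
  have hεbound : ε ≤ pdv e (pdv e w₀) x₀ := by
    have hh := htd
    rw [hcomm1] at hh
    have h2 := congrFun hslice2 x₀
    beta_reduce at h2
    rw [h2] at hh
    exact hh
  -- the equation, sliced at time t₀
  have ht₀0 : (0:ℝ) ≤ t₀ := le_of_lt ht₀pos
  have hsl1 : ∀ i, (fun x : E => pdv ((sv i, (0:ℝ)) : E × ℝ) Ψ (x, t₀)) = pdv (sv i) f₀ := by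
    intro i; rw [pdv_slice hΨd t₀ (sv i)]
  have hsl2 : ∀ i, (fun x : E => pdv ((sv i, (0:ℝ)) : E × ℝ)
      (pdv ((sv i, (0:ℝ)) : E × ℝ) Ψ) (x, t₀)) = pdv (sv i) (pdv (sv i) f₀) := by
    intro i
    have hin : Differentiable ℝ (pdv ((sv i, (0:ℝ)) : E × ℝ) Ψ) :=
      (pdv_contDiff hΨ _).differentiable (by simp)
    have h1 : (fun x : E => pdv ((sv i, (0:ℝ)) : E × ℝ)
        (pdv ((sv i, (0:ℝ)) : E × ℝ) Ψ) (x, t₀))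
        = pdv (sv i) (fun x : E => pdv ((sv i, (0:ℝ)) : E × ℝ) Ψ (x, t₀)) := by
      rw [pdv_slice hin t₀ (sv i)]
    rw [h1, hsl1 i]
  have hw : w₀ = fun x : E => ν * (∑ i, pdv (sv i) (pdv (sv i) f₀) x)
      - (∑ i, (pdv (sv i) f₀ x) ^ 2) / 2 - Uu (x, t₀) := by
    funext x
    have h0 := heq t₀ ht₀0 x
    calc w₀ x = pdv ((0:E),(1:ℝ)) Ψ (x, t₀) := rfl
      _ = ν * (∑ i, pdv ((sv i, (0:ℝ)) : E × ℝ) (pdv ((sv i, (0:ℝ)) : E × ℝ) Ψ) (x, t₀))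
          - (∑ i, (pdv ((sv i, (0:ℝ)) : E × ℝ) Ψ (x, t₀)) ^ 2) / 2 - Uu (x, t₀) := h0
      _ = ν * (∑ i, pdv (sv i) (pdv (sv i) f₀) x)
          - (∑ i, (pdv (sv i) f₀ x) ^ 2) / 2 - Uu (x, t₀) := by
          congr 2
          · congr 1
            exact Finset.sum_congr rfl fun i _ => congrFun (hsl2 i) x
          · congr 1
            refine Finset.sum_congr rfl fun i _ => ?_
            rw [congrFun (hsl1 i) x]
  -- differentiability bookkeeping
  have hD : ∀ (h : E → ℝ), ContDiff ℝ (⊤ : ℕ∞) h → Differentiable ℝ h := fun h hh => hh.differentiable (by simp)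
  have h1sm : ∀ i, ContDiff ℝ (⊤ : ℕ∞) (pdv (sv i) f₀) := fun i => pdv_contDiff hf₀ _
  have h2sm : ∀ i, ContDiff ℝ (⊤ : ℕ∞) (pdv (sv i) (pdv (sv i) f₀)) :=
    fun i => pdv_contDiff (pdv_contDiff hf₀ _) _
  have hSA : ContDiff ℝ (⊤ : ℕ∞) (fun x : E => ∑ i, pdv (sv i) (pdv (sv i) f₀) x) :=
    ContDiff.sum fun i _ => h2sm i
  have hSBs : ContDiff ℝ (⊤ : ℕ∞) (fun x : E => ∑ i, (pdv (sv i) f₀ x) ^ 2) :=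
    ContDiff.sum fun i _ => (h1sm i).pow 2
  have hSB : ContDiff ℝ (⊤ : ℕ∞) (fun x : E => (∑ i, (pdv (sv i) f₀ x) ^ 2) / 2) := hSBs.div_const 2
  -- first spatial derivative of w₀
  have hd1 : pdv e w₀ = fun x : E => ν * (∑ i, pdv e (pdv (sv i) (pdv (sv i) f₀)) x)
      - (∑ i, pdv (sv i) f₀ x * pdv e (pdv (sv i) f₀) x)
      - pdv e (fun x : E => Uu (x, t₀)) x := by
    rw [hw]
    rw [pdv_sub (hD _ ((contDiff_const.mul hSA).sub hSB)) (hD _ hUsl)]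
    rw [pdv_sub (hD _ (contDiff_const.mul hSA)) (hD _ hSB)]
    rw [pdv_const_mul (hD _ hSA)]
    rw [pdv_sum Finset.univ (fun i => hD _ (h2sm i))]
    rw [pdv_div_const (hD _ hSBs)]
    rw [pdv_sum Finset.univ (fun i => hD _ ((h1sm i).pow 2))]
    funext x
    simp only []
    have hsq : ∀ i : Fin d, pdv e (fun x : E => pdv (sv i) f₀ x ^ 2) x
        = 2 * pdv (sv i) f₀ x * pdv e (pdv (sv i) f₀) x := by
      intro i
      have := congrFun (pdv_sq (hD _ (h1sm i)) e) x
      simpa using this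
    rw [Finset.sum_congr rfl fun i _ => hsq i]
    rw [Finset.sum_div]
    congr 1
    congr 1
    apply Finset.sum_congr rfl
    intro i _
    ring
  -- second spatial derivative of w₀ at x₀
  have hQ1sm : ContDiff ℝ (⊤ : ℕ∞) (fun x : E => ∑ i, pdv e (pdv (sv i) (pdv (sv i) f₀)) x) :=
    ContDiff.sum fun i _ => pdv_contDiff (h2sm i) e
  have hQ2sm : ContDiff ℝ (⊤ : ℕ∞) (fun x : E => ∑ i, pdv (sv i) f₀ x * pdv e (pdv (sv i) f₀) x) :=
    ContDiff.sum fun i _ => (h1sm i).mul (pdv_contDiff (h1sm i) e)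
  have hQ3sm : ContDiff ℝ (⊤ : ℕ∞) (pdv e (fun x : E => Uu (x, t₀))) := pdv_contDiff hUsl e
  have hd2 : pdv e (pdv e w₀) x₀
      = ν * (∑ i, pdv e (pdv e (pdv (sv i) (pdv (sv i) f₀))) x₀)
      - (∑ i, (pdv e (pdv (sv i) f₀) x₀ * pdv e (pdv (sv i) f₀) x₀
          + pdv (sv i) f₀ x₀ * pdv e (pdv e (pdv (sv i) f₀)) x₀))
      - pdv e (pdv e (fun x : E => Uu (x, t₀))) x₀ := by
    rw [hd1]
    rw [pdv_sub (hD _ ((contDiff_const.mul hQ1sm).sub hQ2sm)) (hD _ hQ3sm)]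
    rw [pdv_sub (hD _ (contDiff_const.mul hQ1sm)) (hD _ hQ2sm)]
    rw [pdv_const_mul (hD _ hQ1sm)]
    rw [pdv_sum Finset.univ (fun i => hD _ (pdv_contDiff (h2sm i) e))]
    rw [pdv_sum Finset.univ (fun i => hD _ ((h1sm i).mul (pdv_contDiff (h1sm i) e)))]
    simp only []
    have hterm : ∀ i : Fin d, pdv e (fun x : E => pdv (sv i) f₀ x * pdv e (pdv (sv i) f₀) x) x₀
        = pdv e (pdv (sv i) f₀) x₀ * pdv e (pdv (sv i) f₀) x₀
          + pdv (sv i) f₀ x₀ * pdv e (pdv e (pdv (sv i) f₀)) x₀ := by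
      intro i
      have := congrFun (pdv_mul (hD _ (h1sm i)) (hD _ (pdv_contDiff (h1sm i) e)) e) x₀
      beta_reduce at this
      rw [this]
      ring
    rw [Finset.sum_congr rfl fun i _ => hterm i]
  -- commutation identities
  have hc1 : ∀ i, pdv e (pdv (sv i) f₀) = pdv (sv i) (pdv e f₀) :=
    fun i => pdv_comm hf₀ e (sv i)
  have hczero : ∀ i, pdv e (pdv e (pdv (sv i) f₀)) = pdv (sv i) gsl := by
    intro i
    calc pdv e (pdv e (pdv (sv i) f₀)) = pdv e (pdv (sv i) (pdv e f₀)) := by rw [hc1 i]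
      _ = pdv (sv i) (pdv e (pdv e f₀)) := pdv_comm (pdv_contDiff hf₀ e) e (sv i)
  have hclap : ∀ i, pdv e (pdv e (pdv (sv i) (pdv (sv i) f₀)))
      = pdv (sv i) (pdv (sv i) gsl) := by
    intro i
    have i1 : pdv e (pdv (sv i) (pdv (sv i) f₀)) = pdv (sv i) (pdv (sv i) (pdv e f₀)) := by
      calc pdv e (pdv (sv i) (pdv (sv i) f₀))
          = pdv (sv i) (pdv e (pdv (sv i) f₀)) := pdv_comm (pdv_contDiff hf₀ (sv i)) e (sv i)
        _ = pdv (sv i) (pdv (sv i) (pdv e f₀)) := by rw [hc1 i]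
    calc pdv e (pdv e (pdv (sv i) (pdv (sv i) f₀)))
        = pdv e (pdv (sv i) (pdv (sv i) (pdv e f₀))) := by rw [i1]
      _ = pdv (sv i) (pdv e (pdv (sv i) (pdv e f₀))) :=
          pdv_comm (pdv_contDiff (pdv_contDiff hf₀ e) (sv i)) e (sv i)
      _ = pdv (sv i) (pdv (sv i) (pdv e (pdv e f₀))) := by
          rw [pdv_comm (pdv_contDiff hf₀ e) e (sv i)]
  -- bound the three pieces
  have hbound1 : ν * (∑ i, pdv e (pdv e (pdv (sv i) (pdv (sv i) f₀))) x₀) ≤ 0 := by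
    apply mul_nonpos_of_nonneg_of_nonpos (le_of_lt hν)
    apply Finset.sum_nonpos
    intro i _
    rw [congrFun (hclap i) x₀]
    exact pdv2_nonpos_at_max (pdv_contDiff (pdv_contDiff hf₀ e) e) hspatial' (sv i)
  have hzero : ∀ i, pdv e (pdv e (pdv (sv i) f₀)) x₀ = 0 := by
    intro i
    rw [congrFun (hczero i) x₀]
    exact pdv_eq_zero_at_max hspatial' (sv i)
  have hgx₀ : K < gsl x₀ := by
    have h := congrFun hgsl x₀
    beta_reduce at h
    rw [← h]
    exact hgbig
  have hCS : (gsl x₀) ^ 2 ≤ ∑ i, (pdv e (pdv (sv i) f₀) x₀) ^ 2 := by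
    have hrep : gsl x₀ = ∑ i, e i * pdv e (pdv (sv i) f₀) x₀ := by
      have h1 := eucl_decomp e (pdv e f₀) (hD _ (pdv_contDiff hf₀ e)) x₀
      rw [hgsldef]
      rw [h1]
      apply Finset.sum_congr rfl
      intro i _
      rw [congrFun (hc1 i) x₀]
    rw [hrep]
    have hcs := Finset.sum_mul_sq_le_sq_mul_sq Finset.univ (fun i => e i)
      (fun i => pdv e (pdv (sv i) f₀) x₀)
    have hsq := sum_coord_sq e he
    calc (∑ i, e i * pdv e (pdv (sv i) f₀) x₀) ^ 2
        ≤ (∑ i, (e i) ^ 2) * (∑ i, (pdv e (pdv (sv i) f₀) x₀) ^ 2) := hcs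
      _ = ∑ i, (pdv e (pdv (sv i) f₀) x₀) ^ 2 := by rw [hsq, one_mul]
  have hUbound : -(pdv e (pdv e (fun x : E => Uu (x, t₀))) x₀) ≤ K ^ 2 := by
    have hUud : Differentiable ℝ Uu := hUu.differentiable (by simp)
    have h1 : pdv e (fun x : E => Uu (x, t₀)) = fun x : E => pdv ((e,(0:ℝ)) : E × ℝ) Uu (x, t₀) :=
      pdv_slice hUud t₀ e
    have hin : Differentiable ℝ (pdv ((e,(0:ℝ)) : E × ℝ) Uu) :=
      (pdv_contDiff hUu _).differentiable (by simp)
    have h2 : pdv e (pdv e (fun x : E => Uu (x, t₀)))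
        = fun x : E => pdv ((e,(0:ℝ)) : E × ℝ) (pdv ((e,(0:ℝ)) : E × ℝ) Uu) (x, t₀) := by
      rw [h1, pdv_slice hin t₀ e]
    rw [congrFun h2 x₀]
    exact hKU x₀ t₀ e he ⟨ht₀0, le_trans hp₀mem.2 ht₁.2⟩
  -- final contradiction
  have hfin : pdv e (pdv e w₀) x₀ ≤ -(gsl x₀) ^ 2 + K ^ 2 := by
    rw [hd2]
    have hmid : (∑ i, (pdv e (pdv (sv i) f₀) x₀ * pdv e (pdv (sv i) f₀) x₀
        + pdv (sv i) f₀ x₀ * pdv e (pdv e (pdv (sv i) f₀)) x₀))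
        = ∑ i, (pdv e (pdv (sv i) f₀) x₀) ^ 2 := by
      apply Finset.sum_congr rfl
      intro i _
      rw [hzero i]
      ring
    rw [hmid]
    have := hCS
    have := hUbound
    linarith [hbound1]
  have : (0:ℝ) < (gsl x₀) ^ 2 - K ^ 2 := by nlinarith [hgx₀, hK]
  linarith [hεbound, hεpos, hfin]

end MaxPrinciple

section IP
variable {F : Type*} [NormedAddCommGroup F] [InnerProductSpace ℝ F] [CompleteSpace F]

lemma inner_gradient_eq {f : F → ℝ} {x : F} (hf : DifferentiableAt ℝ f x) (v : F) :
    ⟪gradient f x, v⟫ = fderiv ℝ f x v := by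
  have h := hf.hasGradientAt.hasFDerivAt.fderiv
  rw [h]
  exact InnerProductSpace.toDual_apply_apply.symm

/-- One-sided Lipschitz (monotonicity) estimate from a second-derivative bound. -/
lemma onesided_of_second_deriv_bound {f : F → ℝ} (hf : ContDiff ℝ (⊤ : ℕ∞) f) {K : ℝ}
    (hb : ∀ (x : F) (e : F), ‖e‖ = 1 → pdv e (pdv e f) x ≤ K) (a b : F) :
    ⟪gradient f b - gradient f a, b - a⟫ ≤ K * ‖b - a‖ ^ 2 := by
  rcases eq_or_ne b a with rfl | hne
  · simp
  have hfd : Differentiable ℝ f := hf.differentiable (by simp)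
  set u : F := b - a with hu
  have hun : u ≠ 0 := sub_ne_zero.2 hne
  set c : ℝ := ‖u‖ with hc
  have hc0 : 0 < c := norm_pos_iff.2 hun
  set e : F := c⁻¹ • u with he
  have hen : ‖e‖ = 1 := norm_smul_inv_norm hun
  have hue : u = c • e := by
    rw [he, smul_smul, mul_inv_cancel₀ (ne_of_gt hc0), one_smul]
  -- rewrite inner products via fderiv
  have hinner : ⟪gradient f b - gradient f a, u⟫ = pdv u f b - pdv u f a := by
    rw [inner_sub_left, inner_gradient_eq (hfd b) u, inner_gradient_eq (hfd a) u]
    rfl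
  -- MVT
  have hpd : Differentiable ℝ (pdv u f) := (pdv_contDiff hf u).differentiable (by simp)
  have hder : ∀ s : ℝ, HasDerivAt (fun s : ℝ => pdv u f (a + s • u))
      (pdv u (pdv u f) (a + s • u)) s := fun s => hasDerivAt_line hpd a u s
  obtain ⟨ξ, hξmem, hξ⟩ := exists_hasDerivAt_eq_slope (fun s : ℝ => pdv u f (a + s • u))
    (fun s => pdv u (pdv u f) (a + s • u)) (by norm_num : (0:ℝ) < 1)
    (fun s _ => (hder s).continuousAt.continuousWithinAt) (fun s _ => hder s)
  have h1 : pdv u f (a + (1:ℝ) • u) = pdv u f b := by rw [one_smul, hu]; congr 1; abel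
  have h0 : pdv u f (a + (0:ℝ) • u) = pdv u f a := by rw [zero_smul, add_zero]
  rw [h1, h0] at hξ
  -- bound the second derivative along the segment
  have hbnd : pdv u (pdv u f) (a + ξ • u) ≤ K * c ^ 2 := by
    have e1 : pdv u f = fun z => c * pdv e f z := by rw [hue]; exact pdv_smul_dir c e f
    have e2 : pdv u (pdv u f) (a + ξ • u) = c * (c * pdv e (pdv e f) (a + ξ • u)) := by
      have hz := congrFun (pdv_smul_dir c e (pdv u f)) (a + ξ • u)
      rw [← hue] at hz
      have hz2 := congrFun (pdv_const_mul ((pdv_contDiff hf e).differentiable (by simp)) c e)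
        (a + ξ • u)
      rw [← e1] at hz2
      rw [hz, hz2]
    rw [e2]
    have hKb := hb (a + ξ • u) e hen
    calc c * (c * pdv e (pdv e f) (a + ξ • u)) = c ^ 2 * pdv e (pdv e f) (a + ξ • u) := by ring
      _ ≤ c ^ 2 * K := by
          apply mul_le_mul_of_nonneg_left hKb (by positivity)
      _ = K * c ^ 2 := by ring
  have hfinal : pdv u f b - pdv u f a ≤ K * c ^ 2 := by
    have : (pdv u f b - pdv u f a) / (1 - 0) = pdv u f b - pdv u f a := by norm_num
    rw [this] at hξ
    rw [← hξ]
    exact hbnd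
  rw [hinner]
  exact hfinal
end IP

variable {F : Type*} [NormedAddCommGroup F] [InnerProductSpace ℝ F] [CompleteSpace F]

lemma sq_dist_gronwall {y₁ y₂ : ℝ → F} {g : ℝ → F → F} {K tstar T : ℝ}
    (h0 : 0 ≤ tstar) (hT : tstar ≤ T)
    (hy₁ : ∀ t, 0 ≤ t → HasDerivAt y₁ (g t (y₁ t)) t)
    (hy₂ : ∀ t, 0 ≤ t → HasDerivAt y₂ (g t (y₂ t)) t)
    (hos : ∀ t, 0 ≤ t → t ≤ T → ∀ a b : F, ⟪g t b - g t a, b - a⟫ ≤ K * ‖b - a‖ ^ 2) :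
    ‖y₁ T - y₂ T‖ ^ 2 ≤ ‖y₁ tstar - y₂ tstar‖ ^ 2 * Real.exp (2 * K * (T - tstar)) := by
  rcases eq_or_lt_of_le hT with rfl | hlt
  · simp
  set w : ℝ → F := fun t => y₁ t - y₂ t with hw
  set r : ℝ → ℝ := fun t => ⟪w t, w t⟫ with hr
  have hrd : ∀ t, 0 ≤ t → HasDerivAt r
      (2 * ⟪g t (y₁ t) - g t (y₂ t), w t⟫) t := by
    intro t ht
    have hwd : HasDerivAt w (g t (y₁ t) - g t (y₂ t)) t := (hy₁ t ht).sub (hy₂ t ht)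
    have h2 := hwd.inner ℝ hwd
    have h3 : ⟪w t, g t (y₁ t) - g t (y₂ t)⟫ + ⟪g t (y₁ t) - g t (y₂ t), w t⟫
        = 2 * ⟪g t (y₁ t) - g t (y₂ t), w t⟫ := by
      rw [real_inner_comm]; ring
    rwa [h3] at h2
  set h : ℝ → ℝ := fun t => r t * Real.exp (-(2 * K) * t) with hhdef
  have hhd : ∀ t, 0 ≤ t → HasDerivAt h
      (2 * ⟪g t (y₁ t) - g t (y₂ t), w t⟫ * Real.exp (-(2 * K) * t)
        + r t * (-(2 * K) * Real.exp (-(2 * K) * t))) t := by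
    intro t ht
    have hexp : HasDerivAt (fun t : ℝ => Real.exp (-(2 * K) * t))
        (-(2 * K) * Real.exp (-(2 * K) * t)) t := by
      have hlin : HasDerivAt (fun t : ℝ => -(2 * K) * t) (-(2 * K)) t := by
        simpa using (hasDerivAt_id t).const_mul (-(2 * K))
      simpa [mul_comm] using hlin.exp
    exact (hrd t ht).mul hexp
  have hanti : AntitoneOn h (Set.Icc tstar T) := by
    apply antitoneOn_of_deriv_nonpos (convex_Icc tstar T)
    · intro t ht
      exact (hhd t (le_trans h0 ht.1)).continuousAt.continuousWithinAt
    · intro t ht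
      rw [interior_Icc] at ht
      exact (hhd t (le_trans h0 (le_of_lt ht.1))).differentiableAt.differentiableWithinAt
    · intro t ht
      rw [interior_Icc] at ht
      have ht0 : 0 ≤ t := le_trans h0 (le_of_lt ht.1)
      rw [(hhd t ht0).deriv]
      have hbd : ⟪g t (y₁ t) - g t (y₂ t), w t⟫ ≤ K * r t := by
        have := hos t ht0 (le_of_lt ht.2) (y₂ t) (y₁ t)
        have hnorm : r t = ‖w t‖ ^ 2 := real_inner_self_eq_norm_sq (w t)
        rw [hnorm]
        exact this
      have hexp_pos : 0 < Real.exp (-(2 * K) * t) := Real.exp_pos _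
      have : 2 * ⟪g t (y₁ t) - g t (y₂ t), w t⟫ * Real.exp (-(2 * K) * t)
          + r t * (-(2 * K) * Real.exp (-(2 * K) * t))
          = (2 * ⟪g t (y₁ t) - g t (y₂ t), w t⟫ - 2 * K * r t) * Real.exp (-(2 * K) * t) := by
        ring
      rw [this]
      apply mul_nonpos_of_nonpos_of_nonneg _ (le_of_lt hexp_pos)
      linarith
  have hmono := hanti (Set.mem_Icc.2 ⟨le_refl tstar, hT⟩) (Set.mem_Icc.2 ⟨hT, le_refl T⟩) hT
  -- hmono : h T ≤ h tstar
  have hfin : r T ≤ r tstar * Real.exp (2 * K * (T - tstar)) := by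
    have hmul := mul_le_mul_of_nonneg_right hmono (le_of_lt (Real.exp_pos (2 * K * T)))
    have hL : h T * Real.exp (2 * K * T) = r T := by
      rw [hhdef]
      simp only []
      rw [mul_assoc, ← Real.exp_add]
      norm_num
    have hR : h tstar * Real.exp (2 * K * T) = r tstar * Real.exp (2 * K * (T - tstar)) := by
      rw [hhdef]
      simp only []
      rw [mul_assoc, ← Real.exp_add]
      congr 2
      ring
    rw [hL, hR] at hmul
    exact hmul
  have h1 : r T = ‖y₁ T - y₂ T‖ ^ 2 := real_inner_self_eq_norm_sq _
  have h2 : r tstar = ‖y₁ tstar - y₂ tstar‖ ^ 2 := real_inner_self_eq_norm_sq _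
  rw [← h1, ← h2]
  exact hfin

lemma eucl_norm_sq {d : ℕ} (v : EuclideanSpace ℝ (Fin d)) : ‖v‖ ^ 2 = ∑ i, (v i) ^ 2 := by
  rw [EuclideanSpace.norm_eq]
  rw [Real.sq_sqrt (Finset.sum_nonneg fun i _ => sq_nonneg _)]
  exact Finset.sum_congr rfl fun i _ => by rw [Real.norm_eq_abs, sq_abs]

lemma exists_periodic_max_E {d : ℕ} (h : EuclideanSpace ℝ (Fin d) → ℝ) (hc : Continuous h)
    (hper : ∀ (z : Fin d → ℤ) (x : EuclideanSpace ℝ (Fin d)), h (x + intVec z) = h x) :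
    ∃ x₀, ∀ x, h x ≤ h x₀ := by
  classical
  set eqv := PiLp.continuousLinearEquiv 2 ℝ (fun _ : Fin d => ℝ) with heqv
  set Q : Set (EuclideanSpace ℝ (Fin d)) :=
    eqv.symm '' (Set.univ.pi fun _ => Set.Icc (0:ℝ) 1) with hQ
  have hQc : IsCompact Q :=
    (isCompact_univ_pi fun _ => isCompact_Icc).image eqv.symm.continuous
  have hQne : Q.Nonempty := by
    refine ⟨eqv.symm (fun _ => 0), ⟨(fun _ => 0), ?_, rfl⟩⟩
    intro i _; exact ⟨le_refl 0, by norm_num⟩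
  obtain ⟨x₀, _, hmax⟩ := hQc.exists_isMaxOn hQne hc.continuousOn
  refine ⟨x₀, ?_⟩
  intro x
  set z : Fin d → ℤ := fun i => ⌊x i⌋ with hz
  set c : EuclideanSpace ℝ (Fin d) := eqv.symm (fun i => Int.fract (x i)) with hcdef
  have hcx : c + intVec z = x := by
    apply PiLp.ext
    intro i
    have h1 : (c + intVec z) i = c i + intVec z i := rfl
    rw [h1, intVec_apply]
    have h2 : c i = Int.fract (x i) := rfl
    rw [h2, hz]
    exact Int.fract_add_floor (x i)
  have hcQ : c ∈ Q := by
    refine ⟨(fun i => Int.fract (x i)), ?_, rfl⟩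
    intro i _
    exact ⟨Int.fract_nonneg _, le_of_lt (Int.fract_lt_one _)⟩
  have hxc : h x = h c := by rw [← hcx, hper]
  rw [hxc]
  exact hmax hcQ

lemma fderiv_periodic_translate_E {d : ℕ} {H : Type*} [NormedAddCommGroup H] [NormedSpace ℝ H]
    (F : EuclideanSpace ℝ (Fin d) → H) (hF : Differentiable ℝ F)
    (hper : ∀ (z : Fin d → ℤ) x, F (x + intVec z) = F x) :
    ∀ (z : Fin d → ℤ) x, fderiv ℝ F (x + intVec z) = fderiv ℝ F x := by
  intro z x
  rw [← fderiv_translate F hF (intVec z) x]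
  congr 1
  funext y
  exact hper z y


end Aux

/-- **Uniqueness of limit trajectories after a meeting time.** If two limit trajectories pass
through the same point at some time `t* ≥ 0` then they coincide for all `t ≥ t*`. -/
theorem uniqueness_of_limit_trajectories {d : ℕ} (B : BurgersData d)
    (a₁ a₂ : EuclideanSpace ℝ (Fin d)) (x₁ x₂ : ℝ → EuclideanSpace ℝ (Fin d))
    (h₁ : IsLimitTrajectory B a₁ x₁) (h₂ : IsLimitTrajectory B a₂ x₂)
    (tstar : ℝ) (htstar : 0 ≤ tstar) (hmeet : x₁ tstar = x₂ tstar) :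
    ∀ t, tstar ≤ t → x₁ t = x₂ t := by
  intro t ht
  have hT0 : (0:ℝ) ≤ t := le_trans htstar ht
  classical
  -- constants from U
  set Uu : EuclideanSpace ℝ (Fin d) × ℝ → ℝ := Function.uncurry B.U with hUudef
  have hUusm : ContDiff ℝ (⊤ : ℕ∞) Uu := B.hU_smooth
  have hUuper : ∀ (z : Fin d → ℤ) (x : EuclideanSpace ℝ (Fin d)) (s : ℝ),
      Uu (x + intVec z, s) = Uu (x, s) := fun z x s => B.hU_per z x s
  have hUud : Differentiable ℝ Uu := hUusm.differentiable (by simp)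
  have hfU1 : ContDiff ℝ (⊤ : ℕ∞) (fderiv ℝ Uu) := hUusm.fderiv_right (by simp)
  have hF2Usm : ContDiff ℝ (⊤ : ℕ∞) (fderiv ℝ (fderiv ℝ Uu)) := hfU1.fderiv_right (by simp)
  have hF2Uc : Continuous (fderiv ℝ (fderiv ℝ Uu)) := hF2Usm.continuous
  have hfUper := fderiv_periodic_translate Uu hUud hUuper
  have hF2Uper := fderiv_periodic_translate (fderiv ℝ Uu) (hfU1.differentiable (by simp)) hfUper
  obtain ⟨pU, hpUmem, hpUmax⟩ := exists_periodic_max (fun p => ‖fderiv ℝ (fderiv ℝ Uu) p‖)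
    (by exact @Continuous.norm _ (EuclideanSpace ℝ (Fin d) × ℝ →L[ℝ] EuclideanSpace ℝ (Fin d) × ℝ →L[ℝ] ℝ) _ _ (fderiv ℝ (fderiv ℝ Uu)) hF2Uc) (fun z x s => congrArg norm (hF2Uper z x s)) hT0
  set CU : ℝ := ‖fderiv ℝ (fderiv ℝ Uu) pU‖ with hCUdef
  have hCU0 : 0 ≤ CU := ContinuousLinearMap.opNorm_nonneg _
  -- constants from φ₀
  have hφsm := B.hφ₀_smooth
  have hφd : Differentiable ℝ B.φ₀ := hφsm.differentiable (by simp)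
  have hfφ1 : ContDiff ℝ (⊤ : ℕ∞) (fderiv ℝ B.φ₀) := hφsm.fderiv_right (by simp)
  have hF2φsm : ContDiff ℝ (⊤ : ℕ∞) (fderiv ℝ (fderiv ℝ B.φ₀)) := hfφ1.fderiv_right (by simp)
  have hF2φc : Continuous (fderiv ℝ (fderiv ℝ B.φ₀)) := hF2φsm.continuous
  have hfφper := fderiv_periodic_translate_E B.φ₀ hφd B.hφ₀_per
  have hF2φper := fderiv_periodic_translate_E (fderiv ℝ B.φ₀) (hfφ1.differentiable (by simp)) hfφper
  obtain ⟨pP, hpPmax⟩ := exists_periodic_max_E (fun x => ‖fderiv ℝ (fderiv ℝ B.φ₀) x‖)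
    (by exact @Continuous.norm _ (EuclideanSpace ℝ (Fin d) →L[ℝ] EuclideanSpace ℝ (Fin d) →L[ℝ] ℝ) _ _ (fderiv ℝ (fderiv ℝ B.φ₀)) hF2φc) (fun z x => congrArg norm (hF2φper z x))
  set K0 : ℝ := ‖fderiv ℝ (fderiv ℝ B.φ₀) pP‖ with hK0def
  set K : ℝ := max K0 (Real.sqrt CU) with hKdef
  have hK : 0 ≤ K := le_trans (Real.sqrt_nonneg _) (le_max_right _ _)
  -- the Grönwall estimate for each viscosity
  have hev : ∀ᶠ ν in 𝓝[>] (0:ℝ),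
      ‖B.y ν a₁ t - B.y ν a₂ t‖ ^ 2
        ≤ ‖B.y ν a₁ tstar - B.y ν a₂ tstar‖ ^ 2 * Real.exp (2 * K * (t - tstar)) := by
    filter_upwards [self_mem_nhdsWithin] with ν hν
    have hν' : (0:ℝ) < ν := hν
    set Ψ : EuclideanSpace ℝ (Fin d) × ℝ → ℝ := Function.uncurry (B.ψ ν) with hΨdef
    have hΨsm : ContDiff ℝ (⊤ : ℕ∞) Ψ := B.hψ_smooth ν hν'
    have hΨd : Differentiable ℝ Ψ := hΨsm.differentiable (by simp)
    have hΨper : ∀ (z : Fin d → ℤ) (x : EuclideanSpace ℝ (Fin d)) (s : ℝ),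
        Ψ (x + intVec z, s) = Ψ (x, s) := fun z x s => B.hψ_per ν hν' z x s
    -- convert the PDE to directional-derivative form
    have heqc : ∀ (s : ℝ), 0 ≤ s → ∀ (x : EuclideanSpace ℝ (Fin d)),
        pdv ((0 : EuclideanSpace ℝ (Fin d)), (1:ℝ)) Ψ (x, s)
          = ν * (∑ i, pdv ((EuclideanSpace.single i 1 : EuclideanSpace ℝ (Fin d)), (0:ℝ))
                (pdv ((EuclideanSpace.single i 1 : EuclideanSpace ℝ (Fin d)), (0:ℝ)) Ψ) (x, s))
            - (∑ i, (pdv ((EuclideanSpace.single i 1 : EuclideanSpace ℝ (Fin d)), (0:ℝ)) Ψ (x, s)) ^ 2) / 2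
            - Uu (x, s) := by
      intro s hs x
      have hEq := B.hψ_eq ν hν' x s hs
      have hder : deriv (fun σ => B.ψ ν x σ) s
          = pdv ((0 : EuclideanSpace ℝ (Fin d)), (1:ℝ)) Ψ (x, s) := deriv_slice hΨd x s
      have hf : ContDiff ℝ (⊤ : ℕ∞) (fun y => B.ψ ν y s) := contDiff_slice hΨsm s
      have hfd : Differentiable ℝ (fun y => B.ψ ν y s) := hf.differentiable (by simp)
      have hv : ∀ i, (gradient (fun y => B.ψ ν y s) x) i
          = pdv ((EuclideanSpace.single i 1 : EuclideanSpace ℝ (Fin d)), (0:ℝ)) Ψ (x, s) := by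
        intro i
        have h1 : ⟪gradient (fun y => B.ψ ν y s) x, EuclideanSpace.single i (1:ℝ)⟫
            = fderiv ℝ (fun y => B.ψ ν y s) x (EuclideanSpace.single i 1) :=
          inner_gradient_eq (hfd x) _
        have h2 : ⟪gradient (fun y => B.ψ ν y s) x, EuclideanSpace.single i (1:ℝ)⟫
            = (gradient (fun y => B.ψ ν y s) x) i := by
          rw [EuclideanSpace.inner_single_right]; simp
        have h3 : fderiv ℝ (fun y => B.ψ ν y s) x (EuclideanSpace.single i 1)
            = pdv ((EuclideanSpace.single i 1 : EuclideanSpace ℝ (Fin d)), (0:ℝ)) Ψ (x, s) :=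
          fderiv_slice hΨd s x _
        rw [← h2, h1, h3]
      have hgrad : ‖gradient (fun y => B.ψ ν y s) x‖ ^ 2
          = ∑ i, (pdv ((EuclideanSpace.single i 1 : EuclideanSpace ℝ (Fin d)), (0:ℝ)) Ψ (x, s)) ^ 2 := by
        rw [eucl_norm_sq]
        exact Finset.sum_congr rfl fun i _ => by rw [hv i]
      have hlap : spatialLaplacian (B.ψ ν) x s
          = ∑ i, pdv ((EuclideanSpace.single i 1 : EuclideanSpace ℝ (Fin d)), (0:ℝ))
              (pdv ((EuclideanSpace.single i 1 : EuclideanSpace ℝ (Fin d)), (0:ℝ)) Ψ) (x, s) := by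
        rw [spatialLaplacian]
        refine Finset.sum_congr rfl fun i _ => ?_
        rw [iteratedFDeriv_two_apply]
        simp only [Matrix.cons_val_zero, Matrix.cons_val_one, Matrix.head_cons]
        have h4 : fderiv ℝ (fderiv ℝ (fun y => B.ψ ν y s)) x (EuclideanSpace.single i 1)
            (EuclideanSpace.single i 1)
            = pdv (EuclideanSpace.single i 1) (pdv (EuclideanSpace.single i 1)
              (fun y => B.ψ ν y s)) x := (pdv_fderiv_apply hf _ _ _).symm
        rw [h4]
        have h5 : pdv (EuclideanSpace.single i (1:ℝ)) (fun y => B.ψ ν y s)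
            = fun x => pdv ((EuclideanSpace.single i 1 : EuclideanSpace ℝ (Fin d)), (0:ℝ)) Ψ (x, s) :=
          pdv_slice hΨd s _
        rw [h5]
        rw [pdv_slice ((pdv_contDiff hΨsm _).differentiable (by simp)) s
          (EuclideanSpace.single i 1 : EuclideanSpace ℝ (Fin d))]
      rw [hder, hgrad, hlap] at hEq
      have hU' : B.U x s = Uu (x, s) := rfl
      rw [hU'] at hEq
      linarith [hEq]
    -- initial bound
    have hinit : ∀ (x : EuclideanSpace ℝ (Fin d)) (e : EuclideanSpace ℝ (Fin d)), ‖e‖ = 1 →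
        pdv ((e,(0:ℝ))) (pdv ((e,(0:ℝ))) Ψ) (x, 0) ≤ K := by
      intro x e he
      have hsl0 : (fun y => Ψ (y, 0)) = B.φ₀ := funext fun y => B.hψ_init ν hν' y
      have h5 : pdv e (fun y => Ψ (y, 0))
          = fun x => pdv ((e,(0:ℝ))) Ψ (x, 0) := pdv_slice hΨd 0 e
      have h6 : pdv e (pdv e (fun y => Ψ (y, 0))) x
          = pdv ((e,(0:ℝ))) (pdv ((e,(0:ℝ))) Ψ) (x, 0) := by
        rw [h5, pdv_slice ((pdv_contDiff hΨsm _).differentiable (by simp)) 0 e]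
      rw [← h6, hsl0]
      have h7 : pdv e (pdv e B.φ₀) x = fderiv ℝ (fderiv ℝ B.φ₀) x e e := by
        show fderiv ℝ (pdv e B.φ₀) x e = _
        exact pdv_fderiv_apply hφsm e e x
      rw [h7]
      have h8 : fderiv ℝ (fderiv ℝ B.φ₀) x e e ≤ ‖fderiv ℝ (fderiv ℝ B.φ₀) x‖ := by
        calc fderiv ℝ (fderiv ℝ B.φ₀) x e e ≤ |fderiv ℝ (fderiv ℝ B.φ₀) x e e| := le_abs_self _
          _ = ‖fderiv ℝ (fderiv ℝ B.φ₀) x e e‖ := rfl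
          _ ≤ ‖fderiv ℝ (fderiv ℝ B.φ₀) x e‖ * ‖e‖ := ContinuousLinearMap.le_opNorm _ _
          _ ≤ ‖fderiv ℝ (fderiv ℝ B.φ₀) x‖ * ‖e‖ * ‖e‖ :=
              mul_le_mul_of_nonneg_right (ContinuousLinearMap.le_opNorm _ _) (norm_nonneg _)
          _ = ‖fderiv ℝ (fderiv ℝ B.φ₀) x‖ := by rw [he]; ring
      calc fderiv ℝ (fderiv ℝ B.φ₀) x e e ≤ ‖fderiv ℝ (fderiv ℝ B.φ₀) x‖ := h8
        _ ≤ K0 := hpPmax x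
        _ ≤ K := le_max_left _ _
    -- potential second-derivative bound
    have hKU : ∀ (x : EuclideanSpace ℝ (Fin d)) (s : ℝ) (e : EuclideanSpace ℝ (Fin d)),
        ‖e‖ = 1 → s ∈ Set.Icc 0 t →
        -(pdv ((e,(0:ℝ))) (pdv ((e,(0:ℝ))) Uu) (x, s)) ≤ K ^ 2 := by
      intro x s e he hs
      have hen : ‖((e,(0:ℝ)) : EuclideanSpace ℝ (Fin d) × ℝ)‖ = 1 := by
        rw [Prod.norm_def]
        simp [he]
      have h7 : pdv ((e,(0:ℝ))) (pdv ((e,(0:ℝ))) Uu) (x, s)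
          = fderiv ℝ (fderiv ℝ Uu) (x, s) (e,(0:ℝ)) (e,(0:ℝ)) := by
        show fderiv ℝ (pdv ((e,(0:ℝ))) Uu) (x, s) (e,(0:ℝ)) = _
        exact pdv_fderiv_apply hUusm _ _ _
      have h8 : -(pdv ((e,(0:ℝ))) (pdv ((e,(0:ℝ))) Uu) (x, s))
          ≤ ‖fderiv ℝ (fderiv ℝ Uu) (x, s)‖ := by
        rw [h7]
        calc -(fderiv ℝ (fderiv ℝ Uu) (x, s) (e,(0:ℝ)) (e,(0:ℝ)))
            ≤ |fderiv ℝ (fderiv ℝ Uu) (x, s) (e,(0:ℝ)) (e,(0:ℝ))| := neg_le_abs _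
          _ = ‖fderiv ℝ (fderiv ℝ Uu) (x, s) (e,(0:ℝ)) (e,(0:ℝ))‖ := rfl
          _ ≤ ‖fderiv ℝ (fderiv ℝ Uu) (x, s) (e,(0:ℝ))‖ * ‖((e,(0:ℝ)) : EuclideanSpace ℝ (Fin d) × ℝ)‖ :=
              ContinuousLinearMap.le_opNorm _ _
          _ ≤ ‖fderiv ℝ (fderiv ℝ Uu) (x, s)‖ * ‖((e,(0:ℝ)) : EuclideanSpace ℝ (Fin d) × ℝ)‖
              * ‖((e,(0:ℝ)) : EuclideanSpace ℝ (Fin d) × ℝ)‖ :=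
              mul_le_mul_of_nonneg_right (ContinuousLinearMap.le_opNorm _ _) (norm_nonneg _)
          _ = ‖fderiv ℝ (fderiv ℝ Uu) (x, s)‖ := by rw [hen]; ring
      calc -(pdv ((e,(0:ℝ))) (pdv ((e,(0:ℝ))) Uu) (x, s))
          ≤ ‖fderiv ℝ (fderiv ℝ Uu) (x, s)‖ := h8
        _ ≤ CU := hpUmax x s hs
        _ = Real.sqrt CU ^ 2 := (Real.sq_sqrt hCU0).symm
        _ ≤ K ^ 2 := pow_le_pow_left₀ (Real.sqrt_nonneg _) (le_max_right _ _) 2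
    -- apply the maximum principle
    have hfull := max_principle Ψ Uu ν hν' hΨsm hUusm hΨper heqc K t hK hT0 hinit hKU
    -- one-sided Lipschitz bound for the velocity field
    have hos : ∀ s, 0 ≤ s → s ≤ t → ∀ a b : EuclideanSpace ℝ (Fin d),
        ⟪gradient (fun y => B.ψ ν y s) b - gradient (fun y => B.ψ ν y s) a, b - a⟫
          ≤ K * ‖b - a‖ ^ 2 := by
      intro s hs0 hst a b
      apply onesided_of_second_deriv_bound (contDiff_slice hΨsm s)
      intro x e he
      show pdv e (pdv e (fun y => Ψ (y, s))) x ≤ K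
      have h5 : pdv e (fun y => Ψ (y, s))
          = fun x => pdv ((e,(0:ℝ))) Ψ (x, s) := pdv_slice hΨd s e
      have h6 : pdv e (pdv e (fun y => Ψ (y, s))) x
          = pdv ((e,(0:ℝ))) (pdv ((e,(0:ℝ))) Ψ) (x, s) := by
        rw [h5, pdv_slice ((pdv_contDiff hΨsm _).differentiable (by simp)) s e]
      rw [h6]
      exact hfull x s e he ⟨hs0, hst⟩
    -- Grönwall
    exact sq_dist_gronwall (g := fun s x => gradient (fun y => B.ψ ν y s) x) htstar ht
      (fun s hs => (B.hy ν hν' a₁).2 s hs) (fun s hs => (B.hy ν hν' a₂).2 s hs) hos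
  -- pass to the limit
  have hlim1 : Tendsto (fun ν => ‖B.y ν a₁ t - B.y ν a₂ t‖ ^ 2) (𝓝[>] (0:ℝ))
      (𝓝 (‖x₁ t - x₂ t‖ ^ 2)) := (((h₁ t hT0).sub (h₂ t hT0)).norm).pow 2
  have hlim2 : Tendsto (fun ν => ‖B.y ν a₁ tstar - B.y ν a₂ tstar‖ ^ 2
      * Real.exp (2 * K * (t - tstar))) (𝓝[>] (0:ℝ)) (𝓝 0) := by
    have h3 : Tendsto (fun ν => ‖B.y ν a₁ tstar - B.y ν a₂ tstar‖ ^ 2) (𝓝[>] (0:ℝ))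
        (𝓝 (‖x₁ tstar - x₂ tstar‖ ^ 2)) :=
      (((h₁ tstar htstar).sub (h₂ tstar htstar)).norm).pow 2
    have h4 := h3.mul_const (Real.exp (2 * K * (t - tstar)))
    rw [hmeet, sub_self, norm_zero] at h4
    simpa using h4
  have hle : ‖x₁ t - x₂ t‖ ^ 2 ≤ 0 := le_of_tendsto_of_tendsto hlim1 hlim2 hev
  have hz : ‖x₁ t - x₂ t‖ = 0 := by
    have h0 : (0:ℝ) ≤ ‖x₁ t - x₂ t‖ ^ 2 := sq_nonneg _
    have : ‖x₁ t - x₂ t‖ ^ 2 = 0 := le_antisymm hle h0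
    exact pow_eq_zero_iff (by norm_num) |>.mp this
  exact sub_eq_zero.mp (norm_eq_zero.mp hz)
end
end

section
/- Uniform convergence of the viscous potentials: suppose in addition that for every T > 0 there is a constant C(T) such that for all ν ∈ (0,1] the function (x,t) ↦ C(T)(|x|² + t²)/2 − ψ^ν(x,t) is convex on ℝ^d × (0,T). Then for every T > 0 the convergence ψ^ν → φ as ν → 0⁺ is uniform on ℝ^d × [0,T]: for every ε > 0 there is ν₀ > 0 such that |ψ^ν(x,t) − φ(x,t)| < ε for all ν ∈ (0,ν₀), all x ∈ ℝ^d and all t ∈ [0,T]. -/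
open Filter Topology RealInnerProductSpace

noncomputable section

/-! ### Auxiliary lemmas -/

/-- The derivative at the left endpoint is below the slope, for a convex function on `ℝ`. -/
lemma aux_deriv_le_sub {l : ℝ → ℝ} (h : ConvexOn ℝ Set.univ l) {c : ℝ}
    (hd : HasDerivAt l c 0) : c ≤ l 1 - l 0 := by
  have hslope : Tendsto (slope l 0) (𝓝[>] 0) (𝓝 c) :=
    (hasDerivAt_iff_tendsto_slope.1 hd).mono_left
      (nhdsWithin_mono _ fun x hx => ne_of_gt hx)
  refine le_of_tendsto hslope ?_
  filter_upwards [Ioo_mem_nhdsGT_of_mem (Set.mem_Ico.mpr ⟨le_refl (0:ℝ), one_pos⟩)] with u hu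
  have key := h.2 (Set.mem_univ (0:ℝ)) (Set.mem_univ (1:ℝ))
    (by linarith [hu.2] : (0:ℝ) ≤ 1 - u) hu.1.le (by ring)
  simp only [smul_eq_mul, mul_zero, mul_one, zero_add] at key
  rw [slope_def_field]
  rw [div_le_iff₀ (by linarith [hu.1] : (0:ℝ) < u - 0)]
  nlinarith [hu.1]

/-- A convex function along an affine reparametrization of the line is convex. -/
lemma aux_convexOn_affine {f : ℝ → ℝ} (h : ConvexOn ℝ Set.univ f) (p q : ℝ) :
    ConvexOn ℝ Set.univ (fun s => f (p + s * q)) := by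
  refine ⟨convex_univ, fun s _ u _ a b ha hb hab => ?_⟩
  have key := h.2 (Set.mem_univ (p + s * q)) (Set.mem_univ (p + u * q)) ha hb hab
  simp only [smul_eq_mul] at key ⊢
  have : p + (a * s + b * u) * q = a * (p + s * q) + b * (u * q + p) := by
    linear_combination (-p) * hab
  rw [this]
  calc f (a * (p + s * q) + b * (u * q + p)) = f (a * (p + s*q) + b * (p + u*q)) := by ring_nf
    _ ≤ a * f (p + s * q) + b * f (p + u * q) := key

/-- Monotonicity of the derivative of a convex function. -/
lemma aux_deriv_mono {f f' : ℝ → ℝ} (hf : ∀ x, HasDerivAt f (f' x) x)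
    (h : ConvexOn ℝ Set.univ f) {a b : ℝ} (hab : a < b) : f' a ≤ f' b := by
  have h1 : f' a * (b - a) ≤ f b - f a := by
    have hline : HasDerivAt (fun s => f (a + s * (b - a))) (f' a * (b - a)) 0 := by
      have : HasDerivAt (fun s : ℝ => a + s * (b - a)) (b - a) 0 := by
        simpa using ((hasDerivAt_id (0:ℝ)).mul_const (b - a)).const_add a
      simpa [Function.comp_def] using (hf (a + 0 * (b-a))).comp 0 this
    have := aux_deriv_le_sub (aux_convexOn_affine h a (b - a)) hline
    simpa using this
  have h2 : f' b * (a - b) ≤ f a - f b := by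
    have hline : HasDerivAt (fun s => f (b + s * (a - b))) (f' b * (a - b)) 0 := by
      have : HasDerivAt (fun s : ℝ => b + s * (a - b)) (a - b) 0 := by
        simpa using ((hasDerivAt_id (0:ℝ)).mul_const (a - b)).const_add b
      simpa [Function.comp_def] using (hf (b + 0 * (a-b))).comp 0 this
    have := aux_deriv_le_sub (aux_convexOn_affine h b (a - b)) hline
    simpa using this
  nlinarith

/-- Second derivative of a convex smooth function is nonnegative. -/
lemma aux_second_deriv_nonneg {f f' : ℝ → ℝ} (hf : ∀ x, HasDerivAt f (f' x) x)
    {c : ℝ} (hf' : HasDerivAt f' c 0) (h : ConvexOn ℝ Set.univ f) : 0 ≤ c := by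
  have hslope : Tendsto (slope f' 0) (𝓝[>] 0) (𝓝 c) :=
    (hasDerivAt_iff_tendsto_slope.1 hf').mono_left
      (nhdsWithin_mono _ fun x hx => ne_of_gt hx)
  refine ge_of_tendsto hslope ?_
  filter_upwards [self_mem_nhdsWithin] with u hu
  rw [slope_def_field]
  have := aux_deriv_mono hf h (show (0:ℝ) < u from hu)
  exact div_nonneg (by linarith) (by linarith [Set.mem_Ioi.mp hu])

lemma aux_line_deriv1 {d : ℕ} {F : EuclideanSpace ℝ (Fin d) → ℝ} (hF : ContDiff ℝ (⊤ : ℕ∞) F)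
    (x v : EuclideanSpace ℝ (Fin d)) (s : ℝ) :
    HasDerivAt (fun r : ℝ => F (x + r • v)) (fderiv ℝ F (x + s • v) v) s := by
  have hcurve : HasDerivAt (fun r : ℝ => x + r • v) v s := by
    simpa using ((hasDerivAt_id s).smul_const v).const_add x
  simpa [Function.comp_def] using ((hF.differentiable (by simp) (x + s • v)).hasFDerivAt).comp_hasDerivAt s hcurve

lemma aux_line_deriv2 {d : ℕ} {F : EuclideanSpace ℝ (Fin d) → ℝ} (hF : ContDiff ℝ (⊤ : ℕ∞) F)
    (x v : EuclideanSpace ℝ (Fin d)) :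
    HasDerivAt (fun s : ℝ => fderiv ℝ F (x + s • v) v)
      (iteratedFDeriv ℝ 2 F x ![v, v]) 0 := by
  have hD : ContDiff ℝ (⊤ : ℕ∞) (fderiv ℝ F) := hF.fderiv_right (by simp)
  have hcurve : HasDerivAt (fun r : ℝ => x + r • v) v (0:ℝ) := by
    simpa using ((hasDerivAt_id (0:ℝ)).smul_const v).const_add x
  have h1 : HasDerivAt (fun s : ℝ => fderiv ℝ F (x + s • v))
      (fderiv ℝ (fderiv ℝ F) x v) 0 := by
    have := ((hD.differentiable (by simp) (x + (0:ℝ) • v)).hasFDerivAt).comp_hasDerivAt 0 hcurve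
    simpa [Function.comp_def] using this
  have h2 := h1.clm_apply (hasDerivAt_const (0:ℝ) v)
  rw [iteratedFDeriv_two_apply]
  simpa using h2

/-- Convexity of the spatial slice along a line. -/
lemma aux_slice_space {d : ℕ} {C T₂ : ℝ} {f : EuclideanSpace ℝ (Fin d) → ℝ → ℝ}
    (hcv : ConvexOn ℝ ((Set.univ : Set (EuclideanSpace ℝ (Fin d))) ×ˢ Set.Ioo (0:ℝ) T₂)
      (fun p => C * (‖p.1‖ ^ 2 + p.2 ^ 2) / 2 - f p.1 p.2))
    {t : ℝ} (ht : t ∈ Set.Ioo (0:ℝ) T₂) (x v : EuclideanSpace ℝ (Fin d)) :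
    ConvexOn ℝ Set.univ
      (fun s : ℝ => C * (‖x + s • v‖ ^ 2 + t ^ 2) / 2 - f (x + s • v) t) := by
  refine ⟨convex_univ, fun s _ u _ a b ha hb hab => ?_⟩
  have key := hcv.2 (Set.mk_mem_prod (Set.mem_univ (x + s • v)) ht)
    (Set.mk_mem_prod (Set.mem_univ (x + u • v)) ht) ha hb hab
  have h1 : a • ((x + s • v, t) : EuclideanSpace ℝ (Fin d) × ℝ) + b • (x + u • v, t)
      = (x + (a * s + b * u) • v, t) := by
    have hfst : (a • ((x + s • v, t) : EuclideanSpace ℝ (Fin d) × ℝ) + b • (x + u • v, t)).1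
        = x + (a * s + b * u) • v := by
      show a • (x + s • v) + b • (x + u • v) = x + (a * s + b * u) • v
      calc a • (x + s • v) + b • (x + u • v)
          = (a + b) • x + (a * s + b * u) • v := by
            rw [smul_add, smul_add, smul_smul, smul_smul, add_smul, add_smul]; abel
        _ = x + (a * s + b * u) • v := by rw [hab, one_smul]
    have hsnd : (a • ((x + s • v, t) : EuclideanSpace ℝ (Fin d) × ℝ) + b • (x + u • v, t)).2
        = t := by
      show a * t + b * t = t
      linear_combination t * hab
    exact Prod.ext hfst hsnd
  rw [h1] at key
  simpa only [smul_eq_mul] using key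

/-- Convexity of the time slice. -/
lemma aux_slice_time {d : ℕ} {C T₂ : ℝ} {f : EuclideanSpace ℝ (Fin d) → ℝ → ℝ}
    (hcv : ConvexOn ℝ ((Set.univ : Set (EuclideanSpace ℝ (Fin d))) ×ˢ Set.Ioo (0:ℝ) T₂)
      (fun p => C * (‖p.1‖ ^ 2 + p.2 ^ 2) / 2 - f p.1 p.2))
    (x : EuclideanSpace ℝ (Fin d)) :
    ConvexOn ℝ (Set.Ioo (0:ℝ) T₂)
      (fun t : ℝ => C * (‖x‖ ^ 2 + t ^ 2) / 2 - f x t) := by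
  refine ⟨convex_Ioo _ _, fun s hs u hu a b ha hb hab => ?_⟩
  have key := hcv.2 (Set.mk_mem_prod (Set.mem_univ x) hs)
    (Set.mk_mem_prod (Set.mem_univ x) hu) ha hb hab
  have h1 : a • ((x, s) : EuclideanSpace ℝ (Fin d) × ℝ) + b • (x, u) = (x, a * s + b * u) := by
    have hfst : (a • ((x, s) : EuclideanSpace ℝ (Fin d) × ℝ) + b • (x, u)).1 = x := by
      show a • x + b • x = x
      rw [← add_smul, hab, one_smul]
    exact Prod.ext hfst rfl
  rw [h1] at key
  simpa only [smul_eq_mul] using key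

/-- The Laplacian bound coming from semiconcavity. -/
lemma aux_laplacian_le {d : ℕ} {C T₂ : ℝ} {f : EuclideanSpace ℝ (Fin d) → ℝ → ℝ}
    (hsm : ContDiff ℝ (⊤ : ℕ∞) (Function.uncurry f))
    (hcv : ConvexOn ℝ ((Set.univ : Set (EuclideanSpace ℝ (Fin d))) ×ˢ Set.Ioo (0:ℝ) T₂)
      (fun p => C * (‖p.1‖ ^ 2 + p.2 ^ 2) / 2 - f p.1 p.2))
    {t : ℝ} (ht : t ∈ Set.Ioo (0:ℝ) T₂) (x : EuclideanSpace ℝ (Fin d)) :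
    spatialLaplacian f x t ≤ C * d := by
  have hF : ContDiff ℝ (⊤ : ℕ∞) (fun y => f y t) := by
    have : (fun y => f y t) = Function.uncurry f ∘ (fun y => (y, t)) := rfl
    rw [this]
    exact hsm.comp (contDiff_id.prodMk contDiff_const)
  have key : ∀ i : Fin d,
      iteratedFDeriv ℝ 2 (fun y => f y t) x
        ![EuclideanSpace.single i 1, EuclideanSpace.single i 1] ≤ C := by
    intro i
    set e : EuclideanSpace ℝ (Fin d) := EuclideanSpace.single i 1 with he
    set F : EuclideanSpace ℝ (Fin d) → ℝ := fun y => f y t with hFdef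
    have hnorme : ‖e‖ = 1 := by simp [he, EuclideanSpace.norm_single]
    have hq : ∀ s : ℝ, C * (‖x + s • e‖ ^ 2 + t ^ 2) / 2
        = (C * (‖x‖ ^ 2 + t ^ 2) / 2 + (C * ⟪x, e⟫) * s) + (C / 2) * s ^ 2 := by
      intro s
      have hn : ‖x + s • e‖ ^ 2 = ‖x‖ ^ 2 + 2 * (s * ⟪x, e⟫) + s ^ 2 := by
        rw [norm_add_sq_real, real_inner_smul_right, norm_smul, hnorme]
        simp [mul_pow, sq_abs]
      rw [hn]; ring
    set g : ℝ → ℝ := fun s => C * (‖x + s • e‖ ^ 2 + t ^ 2) / 2 - F (x + s • e) with hg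
    set g' : ℝ → ℝ := fun s => (C * ⟪x, e⟫ + C * s) - fderiv ℝ F (x + s • e) e with hg'
    have hgd : ∀ s, HasDerivAt g (g' s) s := by
      intro s
      have hpoly : HasDerivAt (fun s : ℝ =>
          (C * (‖x‖ ^ 2 + t ^ 2) / 2 + (C * ⟪x, e⟫) * s) + (C / 2) * s ^ 2)
          (C * ⟪x, e⟫ + C * s) s := by
        have h1 : HasDerivAt (fun s : ℝ => C * (‖x‖ ^ 2 + t ^ 2) / 2 + (C * ⟪x, e⟫) * s)
            (C * ⟪x, e⟫) s := by
          simpa using ((hasDerivAt_id s).const_mul (C * ⟪x, e⟫)).const_add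
            (C * (‖x‖ ^ 2 + t ^ 2) / 2)
        have h2 : HasDerivAt (fun s : ℝ => (C / 2) * s ^ 2) (C * s) s := by
          have := (hasDerivAt_pow 2 s).const_mul (C / 2)
          refine this.congr_deriv ?_
          simp; ring
        exact h1.add h2
      rw [hg, hg']
      have hsum := hpoly.sub (aux_line_deriv1 hF x e s)
      exact hsum.congr_of_eventuallyEq (Filter.Eventually.of_forall fun r => by
        simp only []; rw [hq r]; rfl)
    have hgd2 : HasDerivAt g' (C - iteratedFDeriv ℝ 2 F x ![e, e]) 0 := by
      have h1 : HasDerivAt (fun s : ℝ => C * ⟪x, e⟫ + C * s) C 0 := by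
        simpa using ((hasDerivAt_id (0:ℝ)).const_mul C).const_add (C * ⟪x, e⟫)
      exact h1.sub (aux_line_deriv2 hF x e)
    have hconv : ConvexOn ℝ Set.univ g := aux_slice_space hcv ht x e
    have := aux_second_deriv_nonneg hgd hgd2 hconv
    linarith
  calc spatialLaplacian f x t ≤ ∑ _i : Fin d, C := Finset.sum_le_sum fun i _ => key i
    _ = C * d := by simp [mul_comm]

/-- Every point has a translate by an integer vector within distance `d` of any given center. -/
lemma aux_rep {d : ℕ} (x c : EuclideanSpace ℝ (Fin d)) :
    ∃ z : Fin d → ℤ, ‖x - intVec z - c‖ ≤ d := by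
  refine ⟨fun i => round (x i - c i), ?_⟩
  set w : EuclideanSpace ℝ (Fin d) := x - intVec (fun i => round (x i - c i)) - c with hw
  have hcoord : ∀ i, |w i| ≤ 1 / 2 := by
    intro i
    have : w i = (x i - c i) - round (x i - c i) := by
      simp [hw, intVec, WithLp.equiv_symm_apply]
      ring
    rw [this]
    exact abs_sub_round _
  have hnorm : ‖w‖ = Real.sqrt (∑ i, ‖w i‖ ^ 2) := EuclideanSpace.norm_eq w
  have hsum : (∑ i, ‖w i‖ ^ 2) ≤ (d : ℝ) ^ 2 := by
    calc (∑ i, ‖w i‖ ^ 2) ≤ ∑ _i : Fin d, (1 : ℝ) := by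
          refine Finset.sum_le_sum fun i _ => ?_
          have := hcoord i
          rw [Real.norm_eq_abs]
          nlinarith [abs_nonneg (w i)]
      _ = (d : ℝ) := by simp
      _ ≤ (d : ℝ) ^ 2 := by
          have : (d : ℕ) ≤ d ^ 2 := Nat.le_self_pow two_ne_zero d
          exact_mod_cast this
  rw [hnorm]
  calc Real.sqrt (∑ i, ‖w i‖ ^ 2) ≤ Real.sqrt ((d : ℝ) ^ 2) := Real.sqrt_le_sqrt hsum
    _ = d := by rw [Real.sqrt_sq (Nat.cast_nonneg d)]

lemma aux_rep_eq {d : ℕ} {f : EuclideanSpace ℝ (Fin d) → ℝ → ℝ} (hper : IsSpacePeriodic f)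
    (x : EuclideanSpace ℝ (Fin d)) (z : Fin d → ℤ) (t : ℝ) :
    f (x - intVec z) t = f x t := by
  have := hper z (x - intVec z) t
  rw [sub_add_cancel] at this
  exact this.symm

/-- A continuous space-periodic function is bounded on any time strip. -/
lemma aux_periodic_bound {d : ℕ} {f : EuclideanSpace ℝ (Fin d) → ℝ → ℝ}
    (hf : Continuous (Function.uncurry f)) (hper : IsSpacePeriodic f) (a b : ℝ) :
    ∃ M : ℝ, 0 ≤ M ∧ ∀ x t, t ∈ Set.Icc a b → |f x t| ≤ M := by
  have hK : IsCompact ((Metric.closedBall (0 : EuclideanSpace ℝ (Fin d)) d) ×ˢ Set.Icc a b) :=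
    (isCompact_closedBall _ _).prod isCompact_Icc
  obtain ⟨M0, hM0⟩ := hK.exists_bound_of_continuousOn hf.continuousOn
  refine ⟨max M0 0, le_max_right _ _, fun x t ht => ?_⟩
  obtain ⟨z, hz⟩ := aux_rep x 0
  have hmem : (x - intVec z, t) ∈
      (Metric.closedBall (0 : EuclideanSpace ℝ (Fin d)) d) ×ˢ Set.Icc a b := by
    refine ⟨?_, ht⟩
    simpa [Metric.mem_closedBall, dist_zero_right] using hz
  have := hM0 _ hmem
  rw [show Function.uncurry f (x - intVec z, t) = f (x - intVec z) t from rfl] at this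
  rw [aux_rep_eq hper x z t] at this
  calc |f x t| ≤ M0 := by simpa [Real.norm_eq_abs] using this
    _ ≤ max M0 0 := le_max_left _ _

/-- Semiconcavity plus periodicity bounds the spatial oscillation. -/
lemma aux_osc {d : ℕ} {C T₂ : ℝ} {f : EuclideanSpace ℝ (Fin d) → ℝ → ℝ}
    (hsm : ContDiff ℝ (⊤ : ℕ∞) (Function.uncurry f)) (hper : IsSpacePeriodic f)
    (hcv : ConvexOn ℝ ((Set.univ : Set (EuclideanSpace ℝ (Fin d))) ×ˢ Set.Ioo (0:ℝ) T₂)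
      (fun p => C * (‖p.1‖ ^ 2 + p.2 ^ 2) / 2 - f p.1 p.2))
    {t : ℝ} (ht : t ∈ Set.Ioo (0:ℝ) T₂) (x y : EuclideanSpace ℝ (Fin d)) :
    f x t - |C| * (d : ℝ) ^ 2 / 2 ≤ f y t := by
  set F : EuclideanSpace ℝ (Fin d) → ℝ := fun y => f y t with hFdef
  have hF : ContDiff ℝ (⊤ : ℕ∞) F := hsm.comp (contDiff_id.prodMk contDiff_const)
  obtain ⟨m, hmball, hmin'⟩ := (isCompact_closedBall (0 : EuclideanSpace ℝ (Fin d))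
    (d : ℝ)).exists_isMinOn ⟨0, Metric.mem_closedBall_self (Nat.cast_nonneg d)⟩
    (hF.continuous.continuousOn)
  have hmin : ∀ u ∈ Metric.closedBall (0 : EuclideanSpace ℝ (Fin d)) (d : ℝ), F m ≤ F u :=
    fun u hu => hmin' hu
  have hglobal : ∀ u, F m ≤ F u := by
    intro u
    obtain ⟨z, hz⟩ := aux_rep u 0
    have : F (u - intVec z) = F u := aux_rep_eq hper u z t
    rw [← this]
    refine hmin _ ?_
    simpa [Metric.mem_closedBall, dist_zero_right] using hz
  have hloc : IsLocalMin F m := Filter.Eventually.of_forall hglobal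
  have hgrad : fderiv ℝ F m = 0 := hloc.fderiv_eq_zero
  have hkey : ∀ u : EuclideanSpace ℝ (Fin d), F u ≤ F m + C * ‖u - m‖ ^ 2 / 2 := by
    intro u
    set w : EuclideanSpace ℝ (Fin d) := u - m with hwdef
    set l : ℝ → ℝ := fun s => C * (‖m + s • w‖ ^ 2 + t ^ 2) / 2 - F (m + s • w) with hl
    have hconv : ConvexOn ℝ Set.univ l := aux_slice_space hcv ht m w
    have hd : HasDerivAt l (C * ⟪m, w⟫) 0 := by
      have hq : ∀ s : ℝ, C * (‖m + s • w‖ ^ 2 + t ^ 2) / 2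
          = (C * (‖m‖ ^ 2 + t ^ 2) / 2 + (C * ⟪m, w⟫) * s) + (C * ‖w‖ ^ 2 / 2) * s ^ 2 := by
        intro s
        have hn : ‖m + s • w‖ ^ 2 = ‖m‖ ^ 2 + 2 * (s * ⟪m, w⟫) + s ^ 2 * ‖w‖ ^ 2 := by
          rw [norm_add_sq_real, real_inner_smul_right, norm_smul]
          rw [Real.norm_eq_abs, mul_pow, sq_abs]
        rw [hn]; ring
      have hpoly : HasDerivAt (fun s : ℝ =>
          (C * (‖m‖ ^ 2 + t ^ 2) / 2 + (C * ⟪m, w⟫) * s) + (C * ‖w‖ ^ 2 / 2) * s ^ 2)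
          (C * ⟪m, w⟫) 0 := by
        have h1 : HasDerivAt (fun s : ℝ => C * (‖m‖ ^ 2 + t ^ 2) / 2 + (C * ⟪m, w⟫) * s)
            (C * ⟪m, w⟫) 0 := by
          simpa using ((hasDerivAt_id (0:ℝ)).const_mul (C * ⟪m, w⟫)).const_add
            (C * (‖m‖ ^ 2 + t ^ 2) / 2)
        have h2 : HasDerivAt (fun s : ℝ => (C * ‖w‖ ^ 2 / 2) * s ^ 2) 0 0 := by
          have := (hasDerivAt_pow 2 (0:ℝ)).const_mul (C * ‖w‖ ^ 2 / 2)
          refine this.congr_deriv ?_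
          simp
        simpa [Pi.add_def] using h1.add h2
      have hdF : HasDerivAt (fun s : ℝ => F (m + s • w)) 0 0 := by
        have h0 := aux_line_deriv1 hF m w 0
        rw [show m + (0:ℝ) • w = m by simp] at h0
        rw [hgrad] at h0
        simpa using h0
      have hsum := hpoly.sub hdF
      rw [hl]
      have : C * ⟪m, w⟫ - 0 = C * ⟪m, w⟫ := by ring
      rw [← this]
      exact hsum.congr_of_eventuallyEq (Filter.Eventually.of_forall fun r => by
        simp only []; rw [hq r]; rfl)
    have hineq := aux_deriv_le_sub hconv hd
    have hl1 : l 1 = C * (‖u‖ ^ 2 + t ^ 2) / 2 - F u := by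
      simp [hl, hwdef]
    have hl0 : l 0 = C * (‖m‖ ^ 2 + t ^ 2) / 2 - F m := by
      simp [hl]
    rw [hl1, hl0] at hineq
    have hexp : ‖w‖ ^ 2 = ‖u‖ ^ 2 - 2 * ⟪u, m⟫ + ‖m‖ ^ 2 := by
      rw [hwdef]; exact norm_sub_sq_real u m
    have hw : ⟪m, w⟫ = ⟪m, u⟫ - ‖m‖ ^ 2 := by
      rw [hwdef, inner_sub_right, real_inner_self_eq_norm_sq]
    have hcomm : ⟪m, u⟫ = ⟪u, m⟫ := real_inner_comm u m
    have key2 : C * ‖w‖ ^ 2 / 2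
        = C * (‖u‖ ^ 2 + t ^ 2) / 2 - C * (‖m‖ ^ 2 + t ^ 2) / 2 - C * ⟪m, w⟫ := by
      linear_combination (C/2) * hexp + C * hw + C * hcomm
    have : ‖u - m‖ ^ 2 = ‖w‖ ^ 2 := by rw [hwdef]
    rw [this]
    linarith [hineq, key2]
  obtain ⟨z, hz⟩ := aux_rep x m
  have hxrep : F (x - intVec z) = F x := aux_rep_eq hper x z t
  have hb := hkey (x - intVec z)
  rw [hxrep] at hb
  have hC : C * ‖x - intVec z - m‖ ^ 2 / 2 ≤ |C| * (d : ℝ) ^ 2 / 2 := by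
    have h1 : ‖x - intVec z - m‖ ^ 2 ≤ (d : ℝ) ^ 2 := by
      nlinarith [norm_nonneg (x - intVec z - m), hz]
    have h2 : C ≤ |C| := le_abs_self C
    nlinarith [abs_nonneg C, norm_nonneg (x - intVec z - m), sq_nonneg ‖x - intVec z - m‖]
  have := hglobal y
  linarith [hglobal y]

/-- Upper bound for the solution via the maximum principle in time. -/
lemma aux_upper {d : ℕ} {ν C T₂ M_U : ℝ} {f U : EuclideanSpace ℝ (Fin d) → ℝ → ℝ}
    (hν : 0 < ν) (hν1 : ν ≤ 1) (hT₂ : 0 < T₂)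
    (hsm : ContDiff ℝ (⊤ : ℕ∞) (Function.uncurry f))
    (heq : SatisfiesBurgers ν f U)
    (hlap : ∀ x : EuclideanSpace ℝ (Fin d), ∀ t ∈ Set.Ioo (0:ℝ) T₂,
      spatialLaplacian f x t ≤ C * d)
    (hMU : 0 ≤ M_U) (hU : ∀ x t, t ∈ Set.Icc (0:ℝ) T₂ → |U x t| ≤ M_U) :
    ∀ x : EuclideanSpace ℝ (Fin d), ∀ t ∈ Set.Icc (0:ℝ) T₂,
      f x t ≤ f x 0 + (|C| * d + M_U) * t := by
  intro x t ht
  set K₁ : ℝ := |C| * d + M_U with hK₁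
  have hfx : ContDiff ℝ (⊤ : ℕ∞) (fun s => f x s) :=
    hsm.comp (contDiff_const.prodMk contDiff_id)
  have hdiff : ∀ s : ℝ, DifferentiableAt ℝ (fun s => f x s) s :=
    fun s => (hfx.differentiable (by simp)) s
  set h : ℝ → ℝ := fun s => f x s - K₁ * s with hh
  have hder : ∀ s : ℝ, HasDerivAt h (deriv (fun s => f x s) s - K₁) s := by
    intro s
    have h1 : HasDerivAt (fun s : ℝ => K₁ * s) K₁ s := by
      simpa using (hasDerivAt_id s).const_mul K₁
    exact ((hdiff s).hasDerivAt).sub h1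
  have hanti : AntitoneOn h (Set.Icc 0 T₂) := by
    refine antitoneOn_of_deriv_nonpos (convex_Icc _ _) ?_ ?_ ?_
    · exact ((hfx.continuous).sub (continuous_const.mul continuous_id)).continuousOn
    · intro s _
      exact ((hder s).differentiableAt).differentiableWithinAt
    · intro s hs
      rw [interior_Icc] at hs
      rw [(hder s).deriv]
      have heqs := heq x s hs.1.le
      have hlaps := hlap x s hs
      have hgrad : (0:ℝ) ≤ ‖gradient (fun y => f y s) x‖ ^ 2 / 2 := by positivity
      have hUb : -M_U ≤ U x s := by
        have := hU x s ⟨hs.1.le, hs.2.le⟩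
        linarith [neg_abs_le (U x s)]
      have hvisc : ν * spatialLaplacian f x s ≤ |C| * d := by
        have h1 : ν * spatialLaplacian f x s ≤ ν * (C * d) :=
          mul_le_mul_of_nonneg_left hlaps hν.le
        have h2 : C * (d:ℝ) ≤ |C| * d := by
          have habs : |C * (d:ℝ)| = |C| * d := by
            rw [abs_mul, Nat.abs_cast]
          linarith [le_abs_self (C * (d:ℝ))]
        have h3 : ν * (C * (d:ℝ)) ≤ |C| * d := by
          rcases le_or_gt 0 (C * (d:ℝ)) with hcd | hcd
          · calc ν * (C * (d:ℝ)) ≤ 1 * (C * (d:ℝ)) := mul_le_mul_of_nonneg_right hν1 hcd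
              _ ≤ |C| * d := by linarith
          · have ha : ν * (C * (d:ℝ)) ≤ 0 := mul_nonpos_of_nonneg_of_nonpos hν.le hcd.le
            have hb : (0:ℝ) ≤ |C| * d := mul_nonneg (abs_nonneg C) (Nat.cast_nonneg d)
            linarith
        linarith
      linarith
  have h0 : (0:ℝ) ∈ Set.Icc (0:ℝ) T₂ := ⟨le_refl _, hT₂.le⟩
  have := hanti h0 ht ht.1
  simp only [hh, mul_zero, sub_zero] at this
  linarith

/-- Convex interpolation in time, extended to the boundary `t = 0` by continuity. -/
lemma aux_time_interp {d : ℕ} {C T₁ T₂ : ℝ} {f : EuclideanSpace ℝ (Fin d) → ℝ → ℝ}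
    (hsm : ContDiff ℝ (⊤ : ℕ∞) (Function.uncurry f))
    (hcvt : ∀ x : EuclideanSpace ℝ (Fin d), ConvexOn ℝ (Set.Ioo (0:ℝ) T₂)
      (fun τ : ℝ => C * (‖x‖ ^ 2 + τ ^ 2) / 2 - f x τ))
    (hT₁ : 0 < T₁) (hT₁₂ : T₁ < T₂) (x : EuclideanSpace ℝ (Fin d))
    {t : ℝ} (ht0 : 0 < t) (htT : t ≤ T₁) :
    C * (‖x‖ ^ 2 + t ^ 2) / 2 - f x t
      ≤ (1 - t / T₁) * (C * (‖x‖ ^ 2 + 0 ^ 2) / 2 - f x 0)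
        + (t / T₁) * (C * (‖x‖ ^ 2 + T₁ ^ 2) / 2 - f x T₁) := by
  set G : ℝ → ℝ := fun τ => C * (‖x‖ ^ 2 + τ ^ 2) / 2 - f x τ with hG
  have hGcont : Continuous G := by
    have hfx : Continuous (fun τ => f x τ) :=
      (hsm.comp (contDiff_const.prodMk contDiff_id)).continuous
    fun_prop
  set Φ : ℝ → ℝ := fun η => ((T₁ - t) / (T₁ - η)) * G η + ((t - η) / (T₁ - η)) * G T₁ with hΦ
  have hT₁ne : T₁ ≠ 0 := hT₁.ne'
  have hlim : Tendsto Φ (𝓝[>] 0) (𝓝 ((1 - t / T₁) * G 0 + (t / T₁) * G T₁)) := by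
    have hcont : ContinuousAt Φ 0 := by
      have h1 : ContinuousAt (fun η : ℝ => (T₁ - t) / (T₁ - η)) 0 :=
        (continuousAt_const.div (continuousAt_const.sub continuousAt_id) (by simpa using hT₁ne))
      have h2 : ContinuousAt (fun η : ℝ => (t - η) / (T₁ - η)) 0 :=
        ((continuousAt_const.sub continuousAt_id).div
          (continuousAt_const.sub continuousAt_id) (by simpa using hT₁ne))
      exact (h1.mul hGcont.continuousAt).add (h2.mul continuousAt_const)
    have hval : Φ 0 = (1 - t / T₁) * G 0 + (t / T₁) * G T₁ := by
      simp only [hΦ, sub_zero]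
      have hdiv : (T₁ - t) / T₁ = 1 - t / T₁ := by field_simp
      rw [hdiv]
    rw [← hval]
    exact hcont.continuousWithinAt.tendsto
  refine ge_of_tendsto hlim ?_
  filter_upwards [Ioo_mem_nhdsGT_of_mem (Set.mem_Ico.mpr ⟨le_refl (0:ℝ), ht0⟩)] with η hη
  have hηT : η < T₁ := lt_of_lt_of_le hη.2 htT
  have hden : (0:ℝ) < T₁ - η := by linarith
  have hne : T₁ - η ≠ 0 := hden.ne'
  have ha : 0 ≤ (T₁ - t) / (T₁ - η) := div_nonneg (by linarith) hden.le
  have hb : 0 ≤ (t - η) / (T₁ - η) := div_nonneg (by linarith [hη.2]) hden.le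
  have hab : (T₁ - t) / (T₁ - η) + (t - η) / (T₁ - η) = 1 := by
    rw [← add_div, div_eq_one_iff_eq hne]; ring
  have hcomb : ((T₁ - t) / (T₁ - η)) * η + ((t - η) / (T₁ - η)) * T₁ = t := by
    field_simp; ring
  have hmem1 : η ∈ Set.Ioo (0:ℝ) T₂ := ⟨hη.1, by linarith⟩
  have hmem2 : T₁ ∈ Set.Ioo (0:ℝ) T₂ := ⟨hT₁, hT₁₂⟩
  have := (hcvt x).2 hmem1 hmem2 ha hb hab
  simp only [smul_eq_mul] at this
  rw [hcomb] at this
  exact this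

/-- Extracting a threshold from an eventually statement on `𝓝[>] 0`. -/
lemma aux_nu {P : ℝ → Prop} (h : ∀ᶠ ν in 𝓝[>] (0:ℝ), P ν) :
    ∃ ν₀ > (0:ℝ), ∀ ν, 0 < ν → ν < ν₀ → P ν := by
  rw [eventually_nhdsWithin_iff, Metric.eventually_nhds_iff] at h
  obtain ⟨δ, hδ, h⟩ := h
  exact ⟨δ, hδ, fun ν h1 h2 =>
    h (by rwa [Real.dist_eq, sub_zero, abs_of_pos h1]) h1⟩

set_option maxHeartbeats 4000000 in
/-- **Uniform convergence of the viscous potentials.** If for every `T > 0` there is `C(T)`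
such that for all `ν ∈ (0,1]` the function `(x,t) ↦ C(T)(|x|² + t²)/2 − ψ^ν(x,t)` is convex on
`ℝ^d × (0,T)`, then for every `T > 0` the pointwise convergence `ψ^ν → φ` as `ν → 0⁺` is
uniform on `ℝ^d × [0,T]`. -/
theorem uniform_convergence_of_viscous_potentials {d : ℕ} (hd : 1 ≤ d)
    (U : EuclideanSpace ℝ (Fin d) → ℝ → ℝ) (φ₀ : EuclideanSpace ℝ (Fin d) → ℝ)
    (hU_smooth : ContDiff ℝ (⊤ : ℕ∞) (Function.uncurry U)) (hU_per : IsSpacePeriodic U)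
    (hφ₀_smooth : ContDiff ℝ (⊤ : ℕ∞) φ₀)
    (hφ₀_per : ∀ (z : Fin d → ℤ) (x : EuclideanSpace ℝ (Fin d)), φ₀ (x + intVec z) = φ₀ x)
    (ψ : ℝ → EuclideanSpace ℝ (Fin d) → ℝ → ℝ)
    (hψ_smooth : ∀ ν, 0 < ν → ContDiff ℝ (⊤ : ℕ∞) (Function.uncurry (ψ ν)))
    (hψ_per : ∀ ν, 0 < ν → IsSpacePeriodic (ψ ν))
    (hψ_eq : ∀ ν, 0 < ν → SatisfiesBurgers ν (ψ ν) U)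
    (hψ_init : ∀ ν, 0 < ν → ∀ x, ψ ν x 0 = φ₀ x)
    (φ : EuclideanSpace ℝ (Fin d) → ℝ → ℝ)
    (hφ_lim : ∀ x t, 0 ≤ t → Tendsto (fun ν => ψ ν x t) (𝓝[>] 0) (𝓝 (φ x t)))
    (hconv : ∀ T, 0 < T → ∃ C : ℝ, ∀ ν, 0 < ν → ν ≤ 1 →
      ConvexOn ℝ ((Set.univ : Set (EuclideanSpace ℝ (Fin d))) ×ˢ Set.Ioo (0 : ℝ) T)
        (fun p => C * (‖p.1‖ ^ 2 + p.2 ^ 2) / 2 - ψ ν p.1 p.2)) :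
    ∀ T, 0 < T → ∀ ε, 0 < ε → ∃ ν₀ > (0 : ℝ), ∀ ν, 0 < ν → ν < ν₀ →
      ∀ (x : EuclideanSpace ℝ (Fin d)), ∀ t ∈ Set.Icc (0 : ℝ) T,
        |ψ ν x t - φ x t| < ε := by
  intro T hT ε hε
  obtain ⟨C, hC⟩ := hconv (T + 2) (by linarith)
  have hT₂pos : (0:ℝ) < T + 2 := by linarith
  have hT₁pos : (0:ℝ) < T + 1 := by linarith
  have hT₁₂ : (T:ℝ) + 1 < T + 2 := by linarith
  obtain ⟨M_U, hMU0, hMU⟩ := aux_periodic_bound hU_smooth.continuous hU_per 0 (T + 2)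
  obtain ⟨B₀, hB₀0, hB₀'⟩ := aux_periodic_bound (f := fun x (_ : ℝ) => φ₀ x)
    (hφ₀_smooth.continuous.comp continuous_fst) (fun z x _ => hφ₀_per z x) 0 (T + 2)
  have hB₀ : ∀ x, |φ₀ x| ≤ B₀ := fun x => hB₀' x 0 ⟨le_refl _, hT₂pos.le⟩
  set K₁ : ℝ := |C| * d + M_U with hK₁def
  have hK₁0 : 0 ≤ K₁ := add_nonneg (mul_nonneg (abs_nonneg C) (Nat.cast_nonneg d)) hMU0
  clear_value K₁
  have hlap : ∀ ν, 0 < ν → ν ≤ 1 → ∀ x, ∀ t ∈ Set.Ioo (0:ℝ) (T + 2),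
      spatialLaplacian (ψ ν) x t ≤ C * d :=
    fun ν hν hν1 x t ht => aux_laplacian_le (hψ_smooth ν hν) (hC ν hν hν1) ht x
  have hupper : ∀ ν, 0 < ν → ν ≤ 1 → ∀ x, ∀ t ∈ Set.Icc (0:ℝ) (T + 2),
      ψ ν x t ≤ φ₀ x + K₁ * t := by
    intro ν hν hν1 x t ht
    rw [hK₁def]
    have := aux_upper hν hν1 hT₂pos (hψ_smooth ν hν) (hψ_eq ν hν)
      (hlap ν hν hν1) hMU0 hMU x t ht
    rwa [hψ_init ν hν x] at this
  have hφ0 : ∀ x, φ x 0 = φ₀ x := by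
    intro x
    refine tendsto_nhds_unique (hφ_lim x 0 le_rfl) ?_
    refine tendsto_const_nhds.congr' ?_
    filter_upwards [self_mem_nhdsWithin] with ν hν
    exact (hψ_init ν hν x).symm
  have hφper : ∀ (z : Fin d → ℤ) x t, 0 ≤ t → φ (x - intVec z) t = φ x t := by
    intro z x t ht
    refine tendsto_nhds_unique ?_ (hφ_lim x t ht)
    refine (hφ_lim (x - intVec z) t ht).congr' ?_
    filter_upwards [self_mem_nhdsWithin] with ν hν
    exact aux_rep_eq (hψ_per ν hν) x z t
  set B₂ : ℝ := |φ 0 (T+1)| + 1 + |C| * (d:ℝ)^2 / 2 with hB₂def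
  have hB₂0 : 0 ≤ B₂ := by rw [hB₂def]; positivity
  clear_value B₂
  have hlowT₁ : ∀ᶠ ν in 𝓝[>] (0:ℝ), 0 < ν → ν ≤ 1 → ∀ x, -B₂ ≤ ψ ν x (T+1) := by
    have h1 := (Metric.tendsto_nhds.mp (hφ_lim 0 (T+1) (by linarith))) 1 one_pos
    filter_upwards [h1] with ν hν1d hν hle1
    intro x
    have hosc := aux_osc (hψ_smooth ν hν) (hψ_per ν hν) (hC ν hν hle1)
      (Set.mem_Ioo.mpr ⟨hT₁pos, hT₁₂⟩) 0 x
    have habs : |ψ ν 0 (T+1) - φ 0 (T+1)| < 1 := by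
      rw [← Real.dist_eq]; exact hν1d
    have h2 := abs_lt.mp habs
    have h3 := neg_abs_le (φ 0 (T+1))
    rw [hB₂def]
    linarith
  set K₂ : ℝ := B₀ + B₂ + |C| * (T+1) / 2 with hK₂def
  have hK₂0 : 0 ≤ K₂ := by
    have h : (0:ℝ) ≤ |C| * (T+1) / 2 := by positivity
    rw [hK₂def]
    exact add_nonneg (add_nonneg hB₀0 hB₂0) h
  clear_value K₂
  have hlow : ∀ᶠ ν in 𝓝[>] (0:ℝ), 0 < ν → ν ≤ 1 →
      ∀ x, ∀ t ∈ Set.Icc (0:ℝ) (T+1), φ₀ x - K₂ * t ≤ ψ ν x t := by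
    filter_upwards [hlowT₁] with ν hlT₁ hν hle1
    intro x t ht
    rcases eq_or_lt_of_le ht.1 with h0 | h0
    · rw [← h0, hψ_init ν hν x]
      simp
    · have hint := aux_time_interp (hψ_smooth ν hν)
        (fun y => aux_slice_time (hC ν hν hle1) y) hT₁pos hT₁₂ x h0 ht.2
      rw [hψ_init ν hν x] at hint
      have hψT₁ := hlT₁ hν hle1 x
      have hphi := hB₀ x
      have hlamT : (t / (T+1)) * (T+1) = t := div_mul_cancel₀ t hT₁pos.ne'
      have hlam0 : 0 ≤ t / (T+1) := div_nonneg ht.1 hT₁pos.le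
      have hlamt : t / (T+1) ≤ t := by
        rw [div_le_iff₀ hT₁pos]
        linarith [mul_nonneg ht.1 hT.le]
      have e1 : 0 ≤ t * ((T+1) - t) := mul_nonneg ht.1 (by linarith [ht.2])
      have e2 : t * ((T+1) - t) ≤ t * (T+1) := by linarith [sq_nonneg t]
      have e4 : C * (t * ((T+1) - t)) ≤ |C| * (t * ((T+1) - t)) :=
        mul_le_mul_of_nonneg_right (le_abs_self C) e1
      have e5 : |C| * (t * ((T+1) - t)) ≤ |C| * (t * (T+1)) :=
        mul_le_mul_of_nonneg_left e2 (abs_nonneg C)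
      have p1 : (t / (T+1)) * φ₀ x ≤ (t / (T+1)) * B₀ :=
        mul_le_mul_of_nonneg_left (le_trans (le_abs_self _) hphi) hlam0
      have p2 : (t / (T+1)) * B₀ ≤ t * B₀ := mul_le_mul_of_nonneg_right hlamt hB₀0
      have p3 : (t / (T+1)) * (-B₂) ≤ (t / (T+1)) * ψ ν x (T+1) :=
        mul_le_mul_of_nonneg_left hψT₁ hlam0
      have p4 : (t / (T+1)) * B₂ ≤ t * B₂ := mul_le_mul_of_nonneg_right hlamt hB₂0
      have hlamT2 : (t / (T+1)) * (T+1)^2 = t * (T+1) := by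
        rw [pow_two, ← mul_assoc, hlamT]
      have hexp2 : (1 - t/(T+1)) * (C * (‖x‖^2 + 0^2)/2 - φ₀ x)
          + (t/(T+1)) * (C * (‖x‖^2 + (T+1)^2)/2 - ψ ν x (T+1))
          = C * ‖x‖^2/2 + C * (t*(T+1))/2 - φ₀ x + (t/(T+1)) * φ₀ x
            - (t/(T+1)) * ψ ν x (T+1) := by
        linear_combination (C/2) * hlamT2
      rw [hexp2] at hint
      have hψt : C*t^2/2 - C*(t*(T+1))/2 + φ₀ x - (t/(T+1))*φ₀ x
          + (t/(T+1)) * ψ ν x (T+1) ≤ ψ ν x t := by linarith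
      rw [hK₂def]
      linarith [hψt, e4, e5, p1, p2, p3, p4]
  set δ : ℝ := min T (min 1 (ε / (2 * (K₁ + K₂ + 1)))) with hδdef
  have hδpos : 0 < δ := lt_min hT (lt_min one_pos (by positivity))
  have hδT : δ ≤ T := min_le_left _ _
  have hδ1 : δ ≤ 1 := le_trans (min_le_right _ _) (min_le_left _ _)
  have hδεpre : (K₁ + K₂) * δ ≤ ε / 2 := by
    have h1 : δ ≤ ε / (2 * (K₁ + K₂ + 1)) := le_trans (min_le_right _ _) (min_le_right _ _)
    have h2 : (K₁ + K₂) * δ ≤ (K₁ + K₂) * (ε / (2 * (K₁ + K₂ + 1))) :=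
      mul_le_mul_of_nonneg_left h1 (by linarith)
    have h3 : (K₁ + K₂) * (ε / (2 * (K₁ + K₂ + 1))) ≤ ε / 2 := by
      rw [mul_div_assoc']
      rw [div_le_div_iff₀ (by positivity) (by norm_num : (0:ℝ) < 2)]
      linarith [hε.le]
    linarith
  have hδε := hδεpre
  clear_value δ
  have hφbound : ∀ x, ∀ t ∈ Set.Icc (0:ℝ) (T+1),
      φ₀ x - K₂ * t ≤ φ x t ∧ φ x t ≤ φ₀ x + K₁ * t := by
    intro x t ht
    constructor
    · refine ge_of_tendsto (hφ_lim x t ht.1) ?_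
      filter_upwards [hlow, Ioc_mem_nhdsGT_of_mem (Set.mem_Ico.mpr ⟨le_refl (0:ℝ), one_pos⟩)]
        with ν h1 h2
      exact h1 h2.1 h2.2 x t ht
    · refine le_of_tendsto (hφ_lim x t ht.1) ?_
      filter_upwards [Ioc_mem_nhdsGT_of_mem (Set.mem_Ico.mpr ⟨le_refl (0:ℝ), one_pos⟩)]
        with ν h2
      exact hupper ν h2.1 h2.2 x t ⟨ht.1, by linarith [ht.2]⟩
  -- constants for the interior region
  have htalt : (0:ℝ) < δ/4 := by linarith
  have htatb : δ/4 ≤ (T+1+(T+2))/2 := by linarith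
  have htbIoo : ((T+1+(T+2))/2 : ℝ) ∈ Set.Ioo (0:ℝ) (T+2) := by
    constructor <;> [linarith; linarith]
  have htaIoo : (δ/4 : ℝ) ∈ Set.Ioo (0:ℝ) (T+2) := by
    constructor <;> [linarith; linarith]
  set A : ℝ := |C| * (T+2)^2/2 + |φ 0 (δ/4)| + |φ 0 ((T+1+(T+2))/2)| + 2 with hAdef
  set B₃ : ℝ := |C| * (T+2)^2/2 + A + |C| * (d:ℝ)^2/2 with hB₃def
  have hA0 : 0 ≤ A := by rw [hAdef]; positivity
  clear_value A
  have hB₃0 : 0 ≤ B₃ := by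
    rw [hB₃def]
    have h1 : (0:ℝ) ≤ |C| * (T+2)^2/2 := by positivity
    have h2 : (0:ℝ) ≤ |C| * (d:ℝ)^2/2 := by positivity
    linarith
  clear_value B₃
  have hlowAll : ∀ᶠ ν in 𝓝[>] (0:ℝ), 0 < ν → ν ≤ 1 →
      ∀ x, ∀ τ ∈ Set.Icc (δ/2) (T+1), -B₃ ≤ ψ ν x τ := by
    have h1 := (Metric.tendsto_nhds.mp (hφ_lim 0 (δ/4) htalt.le)) 1 one_pos
    have h2 := (Metric.tendsto_nhds.mp (hφ_lim 0 ((T+1+(T+2))/2) (by linarith))) 1 one_pos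
    filter_upwards [h1, h2] with ν ha1 ha2 hν hle1
    intro x τ hτ
    have hτIoo : τ ∈ Set.Ioo (0:ℝ) (T+2) :=
      ⟨lt_of_lt_of_le (by linarith) hτ.1, by linarith [hτ.2]⟩
    have hG := aux_slice_time (hC ν hν hle1) (0 : EuclideanSpace ℝ (Fin d))
    have hmemseg : τ ∈ segment ℝ (δ/4) ((T+1+(T+2))/2) := by
      rw [segment_eq_Icc htatb]
      exact ⟨by linarith [hτ.1], by linarith [hτ.2]⟩
    have hmax := hG.le_on_segment htaIoo htbIoo hmemseg
    have hψa : -(|φ 0 (δ/4)| + 1) ≤ ψ ν 0 (δ/4) := by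
      have hd := abs_lt.mp (by rw [← Real.dist_eq]; exact ha1)
      linarith [neg_abs_le (φ 0 (δ/4))]
    have hψb : -(|φ 0 ((T+1+(T+2))/2)| + 1) ≤ ψ ν 0 ((T+1+(T+2))/2) := by
      have hd := abs_lt.mp (by rw [← Real.dist_eq]; exact ha2)
      linarith [neg_abs_le (φ 0 ((T+1+(T+2))/2))]
    have hnorm0 : ‖(0 : EuclideanSpace ℝ (Fin d))‖ = 0 := norm_zero
    have hCbound : ∀ s : ℝ, 0 ≤ s → s ≤ T+2 →
        |C * (‖(0 : EuclideanSpace ℝ (Fin d))‖^2 + s^2)/2| ≤ |C| * (T+2)^2/2 := by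
      intro s hs1 hs2
      rw [hnorm0]
      have h1 : |C * (0^2 + s^2)/2| = |C| * s^2/2 := by
        rw [abs_div, abs_mul]
        norm_num [abs_of_nonneg (sq_nonneg s)]
      rw [h1]
      have hss : s^2 ≤ (T+2)^2 := pow_le_pow_left₀ hs1 hs2 2
      have h7 := mul_le_mul_of_nonneg_left hss (abs_nonneg C)
      linarith
    have hGa : (fun τ => C * (‖(0:EuclideanSpace ℝ (Fin d))‖^2 + τ^2)/2 - ψ ν 0 τ) (δ/4) ≤ A := by
      simp only []
      have := hCbound (δ/4) htalt.le (by linarith)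
      have habs := le_abs_self (C * (‖(0:EuclideanSpace ℝ (Fin d))‖^2 + (δ/4)^2)/2)
      rw [hAdef]
      have h0 : (0:ℝ) ≤ |φ 0 ((T+1+(T+2))/2)| := abs_nonneg _
      linarith
    have hGb : (fun τ => C * (‖(0:EuclideanSpace ℝ (Fin d))‖^2 + τ^2)/2 - ψ ν 0 τ)
        ((T+1+(T+2))/2) ≤ A := by
      simp only []
      have := hCbound ((T+1+(T+2))/2) (by linarith) (by linarith)
      have habs := le_abs_self (C * (‖(0:EuclideanSpace ℝ (Fin d))‖^2 + ((T+1+(T+2))/2)^2)/2)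
      rw [hAdef]
      have h0 : (0:ℝ) ≤ |φ 0 (δ/4)| := abs_nonneg _
      linarith
    have hGτ : C * (‖(0:EuclideanSpace ℝ (Fin d))‖^2 + τ^2)/2 - ψ ν 0 τ ≤ A := by
      calc C * (‖(0:EuclideanSpace ℝ (Fin d))‖^2 + τ^2)/2 - ψ ν 0 τ
          ≤ max ((fun τ => C * (‖(0:EuclideanSpace ℝ (Fin d))‖^2 + τ^2)/2 - ψ ν 0 τ) (δ/4))
            ((fun τ => C * (‖(0:EuclideanSpace ℝ (Fin d))‖^2 + τ^2)/2 - ψ ν 0 τ)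
              ((T+1+(T+2))/2)) := hmax
        _ ≤ A := max_le hGa hGb
    have hψ0τ : -( |C| * (T+2)^2/2 + A) ≤ ψ ν 0 τ := by
      have hc := hCbound τ (by linarith [hτ.1]) (by linarith [hτ.2])
      have habs := neg_abs_le (C * (‖(0:EuclideanSpace ℝ (Fin d))‖^2 + τ^2)/2)
      linarith
    have hosc := aux_osc (hψ_smooth ν hν) (hψ_per ν hν) (hC ν hν hle1) hτIoo 0 x
    rw [hB₃def]
    linarith
  -- Lipschitz bounds
  have hrpos : (0:ℝ) < δ/4 := htalt
  set M : ℝ := |C| * (((d:ℝ)+1)^2 + (T+2)^2)/2 + (B₀ + K₁*(T+2)) + B₃ + 1 with hMdef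
  have hM0 : 0 < M := by
    rw [hMdef]
    have h1 : (0:ℝ) ≤ |C| * (((d:ℝ)+1)^2 + (T+2)^2)/2 := by positivity
    have h2 : (0:ℝ) ≤ K₁*(T+2) := mul_nonneg hK₁0 (by linarith)
    linarith
  clear_value M
  set κr : ℝ := 2*M/((δ/4)/2) with hκrdef
  have hκr0 : 0 ≤ κr := by
    rw [hκrdef]; positivity
  clear_value κr
  have hLip : ∀ᶠ ν in 𝓝[>] (0:ℝ), 0 < ν → ν ≤ 1 →
      ∀ p : EuclideanSpace ℝ (Fin d) × ℝ,
      p ∈ (Metric.closedBall (0:EuclideanSpace ℝ (Fin d)) (d:ℝ)) ×ˢ Set.Icc δ T →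
      LipschitzOnWith (Real.toNNReal κr)
        (fun q : EuclideanSpace ℝ (Fin d) × ℝ => C * (‖q.1‖^2 + q.2^2)/2 - ψ ν q.1 q.2)
        (Metric.ball p ((δ/4)/2)) := by
    filter_upwards [hlowAll] with ν hlow3 hν hle1
    intro p hp
    have hp1 : dist p.1 0 ≤ (d:ℝ) := Metric.mem_closedBall.mp hp.1
    have hp2 : p.2 ∈ Set.Icc δ T := hp.2
    have hsnd : ∀ q : EuclideanSpace ℝ (Fin d) × ℝ, dist q.2 p.2 ≤ dist q p := by
      intro q
      rw [Prod.dist_eq]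
      exact le_max_right _ _
    have hfst : ∀ q : EuclideanSpace ℝ (Fin d) × ℝ, dist q.1 p.1 ≤ dist q p := by
      intro q
      rw [Prod.dist_eq]
      exact le_max_left _ _
    have hballsub : Metric.ball p (δ/4) ⊆
        (Set.univ : Set (EuclideanSpace ℝ (Fin d))) ×ˢ Set.Ioo (0:ℝ) (T+2) := by
      intro q hq
      have hdq : dist q p < δ/4 := Metric.mem_ball.mp hq
      have h2 : |q.2 - p.2| < δ/4 := by
        rw [← Real.dist_eq]
        exact lt_of_le_of_lt (hsnd q) hdq
      have h2' := abs_lt.mp h2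
      refine ⟨Set.mem_univ _, ?_, ?_⟩
      · have := hp2.1; linarith [h2'.1]
      · have := hp2.2; linarith [h2'.2]
    have hconvball := (hC ν hν hle1).subset hballsub (convex_ball _ _)
    have habs : ∀ a : EuclideanSpace ℝ (Fin d) × ℝ, dist a p < δ/4 →
        |C * (‖a.1‖^2 + a.2^2)/2 - ψ ν a.1 a.2| ≤ M := by
      intro a ha
      have h2 : |a.2 - p.2| < δ/4 := by
        rw [← Real.dist_eq]
        exact lt_of_le_of_lt (hsnd a) ha
      have h2' := abs_lt.mp h2
      have ha2low : δ/2 ≤ a.2 := by have := hp2.1; linarith [h2'.1]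
      have ha2high : a.2 ≤ T+1 := by have := hp2.2; linarith [h2'.2]
      have ha2pos : 0 ≤ a.2 := by linarith
      have ha1 : ‖a.1‖ ≤ (d:ℝ) + 1 := by
        have h3 : dist a.1 p.1 < δ/4 := lt_of_le_of_lt (hfst a) ha
        calc ‖a.1‖ = dist a.1 0 := by rw [dist_zero_right]
          _ ≤ dist a.1 p.1 + dist p.1 0 := dist_triangle _ _ _
          _ ≤ (d:ℝ) + 1 := by linarith
      have hup := hupper ν hν hle1 a.1 a.2 ⟨ha2pos, by linarith⟩
      have hlo := hlow3 hν hle1 a.1 a.2 ⟨ha2low, ha2high⟩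
      have hq1 : ‖a.1‖^2 ≤ ((d:ℝ)+1)^2 := pow_le_pow_left₀ (norm_nonneg a.1) ha1 2
      have hq2 : a.2^2 ≤ (T+2)^2 := pow_le_pow_left₀ ha2pos (by linarith) 2
      have hquad : |C * (‖a.1‖^2 + a.2^2)/2| ≤ |C| * (((d:ℝ)+1)^2 + (T+2)^2)/2 := by
        rw [abs_div, abs_mul]
        have h4 : |(‖a.1‖^2 + a.2^2)| = ‖a.1‖^2 + a.2^2 :=
          abs_of_nonneg (by positivity)
        rw [h4]
        have h5 : ‖a.1‖^2 + a.2^2 ≤ ((d:ℝ)+1)^2 + (T+2)^2 := by linarith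
        have h6 : |(2:ℝ)| = 2 := by norm_num
        rw [h6]
        have := mul_le_mul_of_nonneg_left h5 (abs_nonneg C)
        linarith
      have hquad2 := abs_le.mp hquad
      have hψup : ψ ν a.1 a.2 ≤ B₀ + K₁*(T+2) := by
        have h7 := hB₀ a.1
        have h8 : K₁ * a.2 ≤ K₁ * (T+2) := mul_le_mul_of_nonneg_left (by linarith) hK₁0
        linarith [le_abs_self (φ₀ a.1)]
      have h9 : (0:ℝ) ≤ K₁*(T+2) := mul_nonneg hK₁0 (by linarith)
      rw [abs_le]
      constructor
      · rw [hMdef]; linarith [hquad2.1, hquad2.2, hψup, hlo, hB₀0, hB₃0, h9]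
      · rw [hMdef]; linarith [hquad2.1, hquad2.2, hψup, hlo, hB₀0, hB₃0, h9]
    have hlip0 := hconvball.lipschitzOnWith_of_abs_le
      (show (0:ℝ) < (δ/4)/2 by linarith) habs
    rw [sub_half] at hlip0
    rw [hκrdef]
    exact hlip0
  -- finite net
  set ρ : ℝ := min ((δ/4)/8) (ε/(8*(κr+1))) with hρdef
  have hρpos : 0 < ρ := lt_min (by linarith) (by positivity)
  have hρr : ρ ≤ (δ/4)/8 := min_le_left _ _
  have hρε : ρ ≤ ε/(8*(κr+1)) := min_le_right _ _
  clear_value ρ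
  have hKcomp : IsCompact
      ((Metric.closedBall (0:EuclideanSpace ℝ (Fin d)) (d:ℝ)) ×ˢ Set.Icc δ T) :=
    (isCompact_closedBall _ _).prod isCompact_Icc
  obtain ⟨b', hb'K, hb'fin, hcover⟩ := hKcomp.elim_finite_subcover_image
    (fun p _ => Metric.isOpen_ball)
    (fun q hq => Set.mem_biUnion hq (Metric.mem_ball_self hρpos))
  have hnet : ∀ᶠ ν in 𝓝[>] (0:ℝ), ∀ p ∈ b', |ψ ν p.1 p.2 - φ p.1 p.2| < ε/8 := by
    rw [Filter.eventually_all_finite hb'fin]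
    intro p hp
    have hp2 : 0 ≤ p.2 := le_trans hδpos.le ((hb'K hp).2.1)
    have := (Metric.tendsto_nhds.mp (hφ_lim p.1 p.2 hp2)) (ε/8) (by positivity)
    filter_upwards [this] with ν hν
    rwa [Real.dist_eq] at hν
  -- conclusion
  have hfinal : ∀ᶠ ν in 𝓝[>] (0:ℝ), ∀ x, ∀ t ∈ Set.Icc (0:ℝ) T,
      |ψ ν x t - φ x t| < ε := by
    filter_upwards [hlow, hlowAll, hLip, hnet,
      Ioc_mem_nhdsGT_of_mem (Set.mem_Ico.mpr ⟨le_refl (0:ℝ), one_pos⟩)]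
      with ν hlowν hlow3ν hLipν hnetν hν1'
    have hν : 0 < ν := hν1'.1
    have hν1 : ν ≤ 1 := hν1'.2
    intro x t ht
    rcases le_or_gt t δ with hcase | hcase
    · have htT₁ : t ∈ Set.Icc (0:ℝ) (T+1) := ⟨ht.1, by linarith [ht.2]⟩
      have h1 := hlowν hν hν1 x t htT₁
      have h2 := hupper ν hν hν1 x t ⟨ht.1, by linarith [ht.2]⟩
      have h3 := hφbound x t htT₁
      have habs : |ψ ν x t - φ x t| ≤ (K₁ + K₂) * t := by
        rw [abs_sub_le_iff]
        constructor
        · linarith [h1, h2, h3.1, h3.2]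
        · linarith [h1, h2, h3.1, h3.2]
      have h4 : (K₁ + K₂) * t ≤ (K₁+K₂)*δ :=
        mul_le_mul_of_nonneg_left hcase (by linarith)
      linarith
    · obtain ⟨z, hz⟩ := aux_rep x 0
      have hx'norm : ‖x - intVec z‖ ≤ (d:ℝ) := by simpa using hz
      have ht0 : (0:ℝ) ≤ t := ht.1
      have hqK : ((x - intVec z, t) : EuclideanSpace ℝ (Fin d) × ℝ) ∈
          (Metric.closedBall (0:EuclideanSpace ℝ (Fin d)) (d:ℝ)) ×ˢ Set.Icc δ T := by
        refine ⟨?_, hcase.le, ht.2⟩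
        simpa [Metric.mem_closedBall, dist_zero_right] using hx'norm
      obtain ⟨p, hpb', hpball⟩ := Set.mem_iUnion₂.mp (hcover hqK)
      have hpK := hb'K hpb'
      have hdistqp : dist ((x - intVec z, t) : EuclideanSpace ℝ (Fin d) × ℝ) p < ρ :=
        Metric.mem_ball.mp hpball
      have hqball2 : ((x - intVec z, t) : EuclideanSpace ℝ (Fin d) × ℝ) ∈
          Metric.ball p ((δ/4)/2) := by
        rw [Metric.mem_ball]
        calc dist ((x - intVec z, t) : EuclideanSpace ℝ (Fin d) × ℝ) p < ρ := hdistqp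
          _ ≤ (δ/4)/8 := hρr
          _ < (δ/4)/2 := by linarith
      have hpball2 : p ∈ Metric.ball p ((δ/4)/2) := Metric.mem_ball_self (by linarith)
      have hκcoe : ((Real.toNNReal κr : NNReal) : ℝ) = κr := Real.coe_toNNReal κr hκr0
      have hκρ : κr * ρ ≤ ε/8 := by
        have h1 : ρ ≤ ε/(8*(κr+1)) := hρε
        have h2 : κr * ρ ≤ κr * (ε/(8*(κr+1))) := mul_le_mul_of_nonneg_left h1 hκr0
        have h3 : κr * (ε/(8*(κr+1))) ≤ ε/8 := by
          rw [mul_div_assoc']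
          rw [div_le_div_iff₀ (by positivity) (by norm_num : (0:ℝ) < 8)]
          linarith [hε.le]
        linarith
      have hlipν := hLipν hν hν1 p hpK
      have he1 : |(C * (‖x - intVec z‖^2 + t^2)/2 - ψ ν (x - intVec z) t)
          - (C * (‖p.1‖^2 + p.2^2)/2 - ψ ν p.1 p.2)| ≤ κr * ρ := by
        have hdd := hlipν.dist_le_mul _ hqball2 _ hpball2
        rw [hκcoe] at hdd
        rw [Real.dist_eq] at hdd
        calc |(C * (‖x - intVec z‖^2 + t^2)/2 - ψ ν (x - intVec z) t)
            - (C * (‖p.1‖^2 + p.2^2)/2 - ψ ν p.1 p.2)|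
            ≤ κr * dist ((x - intVec z, t) : EuclideanSpace ℝ (Fin d) × ℝ) p := hdd
          _ ≤ κr * ρ := mul_le_mul_of_nonneg_left hdistqp.le hκr0
      have he2 : |ψ ν p.1 p.2 - φ p.1 p.2| < ε/8 := hnetν p hpb'
      have hp20 : 0 ≤ p.2 := le_trans hδpos.le hpK.2.1
      have he3 : |(C * (‖p.1‖^2 + p.2^2)/2 - φ p.1 p.2)
          - (C * (‖x - intVec z‖^2 + t^2)/2 - φ (x - intVec z) t)| ≤ κr * ρ := by
        have htd : Tendsto (fun ν' => (C * (‖p.1‖^2 + p.2^2)/2 - ψ ν' p.1 p.2)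
            - (C * (‖x - intVec z‖^2 + t^2)/2 - ψ ν' (x - intVec z) t)) (𝓝[>] (0:ℝ))
            (𝓝 ((C * (‖p.1‖^2 + p.2^2)/2 - φ p.1 p.2)
            - (C * (‖x - intVec z‖^2 + t^2)/2 - φ (x - intVec z) t))) :=
          (tendsto_const_nhds.sub (hφ_lim p.1 p.2 hp20)).sub
            (tendsto_const_nhds.sub (hφ_lim (x - intVec z) t ht0))
        refine le_of_tendsto htd.abs ?_
        filter_upwards [hLip, Ioc_mem_nhdsGT_of_mem (Set.mem_Ico.mpr ⟨le_refl (0:ℝ), one_pos⟩)]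
          with ν' hL' h1'
        have hlip' := hL' h1'.1 h1'.2 p hpK
        have hdd := hlip'.dist_le_mul _ hpball2 _ hqball2
        rw [hκcoe] at hdd
        rw [Real.dist_eq] at hdd
        calc |(C * (‖p.1‖^2 + p.2^2)/2 - ψ ν' p.1 p.2)
            - (C * (‖x - intVec z‖^2 + t^2)/2 - ψ ν' (x - intVec z) t)|
            ≤ κr * dist p ((x - intVec z, t) : EuclideanSpace ℝ (Fin d) × ℝ) := hdd
          _ = κr * dist ((x - intVec z, t) : EuclideanSpace ℝ (Fin d) × ℝ) p := by
              rw [dist_comm]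
          _ ≤ κr * ρ := mul_le_mul_of_nonneg_left hdistqp.le hκr0
      have hper1 : ψ ν x t = ψ ν (x - intVec z) t := (aux_rep_eq (hψ_per ν hν) x z t).symm
      have hper2 : φ x t = φ (x - intVec z) t := (hφper z x t ht0).symm
      rw [hper1, hper2]
      have habs1 := abs_le.mp he1
      have habs2 := abs_lt.mp he2
      have habs3 := abs_le.mp he3
      rw [abs_lt]
      constructor
      · linarith [habs1.1, habs1.2, habs2.1, habs2.2, habs3.1, habs3.2, hκρ, hε]
      · linarith [habs1.1, habs1.2, habs2.1, habs2.2, habs3.1, habs3.2, hκρ, hε]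
  exact aux_nu hfinal
end
end

section
/- Well-definedness of the h-gradient: let h : ℝ^m → ℝ be a differentiable convex function, let D ⊆ ℝ^m be a convex set, and let P₁, P₂ ∈ D both be minimizers of h over D (h(P₁) = h(P₂) ≤ h(P) for all P ∈ D). Then the derivatives of h at the two points coincide: ∇h(P₁) = ∇h(P₂). -/
/-!
Put `g = ∇h(P₁)`. Minimality of `P₁` on the convex set `D` gives `⟪g, P₂ - P₁⟫ ≥ 0`, while the
supporting-hyperplane inequality of the convex function `h` at `P₁` gives
`⟪g, P₂ - P₁⟫ ≤ h P₂ - h P₁ = 0`. So the tangent hyperplane of `h` at `P₁` also touches `h` at `P₂`;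
then `P₂` is a global minimum of the convex function `h - ⟪g, ·⟫`, whence `∇h(P₂) = g`.
-/

open Set

variable {E : Type*} [NormedAddCommGroup E] [NormedSpace ℝ E]
  {f : E → ℝ} {f' : E →L[ℝ] ℝ} {s : Set E} {x y : E}

theorem ConvexOn.add_fderiv_sub_le (hf : ConvexOn ℝ univ f) (hx : HasFDerivAt f f' x) (y : E) :
    f x + f' (y - x) ≤ f y := by
  have hline : ConvexOn ℝ univ (f ∘ AffineMap.lineMap (k := ℝ) x y) := by
    simpa using hf.comp_affineMap (AffineMap.lineMap (k := ℝ) x y)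
  have hderiv : HasDerivAt (f ∘ AffineMap.lineMap (k := ℝ) x y) (f' (y - x)) 0 := by
    apply HasFDerivAt.comp_hasDerivAt _ _ AffineMap.hasDerivAt_lineMap
    simpa using hx
  simpa [slope_def_field, le_sub_iff_add_le'] using
    hline.le_slope_of_hasDerivAt (mem_univ 0) (mem_univ 1) one_pos hderiv

theorem ConvexOn.fderiv_eq_of_eq_add_fderiv_sub (hf : ConvexOn ℝ univ f) (hx : HasFDerivAt f f' x)
    (hy : DifferentiableAt ℝ f y) (hxy : f y = f x + f' (y - x)) : fderiv ℝ f y = f' := by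
  have hmin : IsLocalMin (fun z => f z - f' z) y :=
    Filter.Eventually.of_forall fun z => by
      have := hf.add_fderiv_sub_le hx z
      simp only [map_sub] at hxy this
      linarith
  exact sub_eq_zero.mp (hmin.hasFDerivAt_eq_zero (hy.hasFDerivAt.sub f'.hasFDerivAt))

theorem IsMinOn.fderiv_sub_nonneg (hmin : IsMinOn f s x) (hs : Convex ℝ s) (hx : x ∈ s)
    (hy : y ∈ s) (hf : HasFDerivAt f f' x) : 0 ≤ f' (y - x) :=
  hmin.localize.hasFDerivWithinAt_nonneg hf.hasFDerivWithinAt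
    (sub_mem_posTangentConeAt_of_segment_subset (hs.segment_subset hx hy))

/-- **Well-definedness of the h-gradient.** If a differentiable convex function `h` attains its
minimum over a convex set `D` at two points `P₁, P₂ ∈ D`, then the gradients of `h` at these
two points coincide. -/
theorem h_gradient_well_defined {m : ℕ}
    (h : EuclideanSpace ℝ (Fin m) → ℝ) (hh_diff : Differentiable ℝ h)
    (hh_conv : ConvexOn ℝ Set.univ h)
    (D : Set (EuclideanSpace ℝ (Fin m))) (hD_conv : Convex ℝ D)
    (P₁ P₂ : EuclideanSpace ℝ (Fin m)) (hP₁ : P₁ ∈ D) (hP₂ : P₂ ∈ D)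
    (heq : h P₁ = h P₂) (hmin₁ : ∀ P ∈ D, h P₁ ≤ h P) :
    gradient h P₁ = gradient h P₂ := by
  have hP₁_deriv := (hh_diff P₁).hasFDerivAt
  have hdir : fderiv ℝ h P₁ (P₂ - P₁) = 0 := by
    have hle := hh_conv.add_fderiv_sub_le hP₁_deriv P₂
    have hge := IsMinOn.fderiv_sub_nonneg hmin₁ hD_conv hP₁ hP₂ hP₁_deriv
    linarith
  have hfderiv : fderiv ℝ h P₂ = fderiv ℝ h P₁ :=
    hh_conv.fderiv_eq_of_eq_add_fderiv_sub hP₁_deriv (hh_diff P₂) (by rw [hdir, heq, add_zero])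
  simp only [gradient, hfderiv]
end

section
/- Gronwall-type stability of gradient trajectories: let T > 0, C > 0, ε > 0, α > 0, and let ψ, ψ* : ℝ^d × [0,T] → ℝ be continuously differentiable in the space variable, such that for every t ∈ [0,T] the functions x ↦ C|x|²/2 − ψ(x,t) and x ↦ C|x|²/2 − ψ*(x,t) are convex on ℝ^d, and |ψ(x,t) − ψ*(x,t)| < ε for all x ∈ ℝ^d, t ∈ [0,T]. Let y, y* : [0,T] → ℝ^d be differentiable with ẏ(t) = ∇_x ψ(y(t), t) and ẏ*(t) = ∇_x ψ*(y*(t), t), and suppose |y(0) − y*(0)|² < α. Then for all t ∈ [0,T]: |y(t) − y*(t)|² < 2ε (e^{2Ct} − 1)/C + α e^{2Ct}. -/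
/-!
Put `φ(t) = |y(t) − y*(t)|²`, so `φ' = 2⟨y − y*, ∇ψ(y) − ∇ψ*(y*)⟩`. Convexity of `C|x|²/2 − ψ`
says that `ψ` lies below its tangent paraboloids, `ψ(x) ≤ ψ(a) + ⟨∇ψ(a), x − a⟩ + C|x − a|²/2`.
Using this for `ψ` at `y` and for `ψ*` at `y*` and adding, the two values of `ψ − ψ*` that appear
are bounded by `ε`, which gives `φ' ≤ 2Cφ + 4ε`; Grönwall's inequality concludes.
-/

open Set Real

theorem ConvexOn.add_apply_sub_le_of_hasFDerivAt {E : Type*} [NormedAddCommGroup E]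
    [NormedSpace ℝ E] {s : Set E} {g : E → ℝ} {g' : E →L[ℝ] ℝ} {x y : E}
    (hg : ConvexOn ℝ s g) (hx : x ∈ s) (hy : y ∈ s) (hg' : HasFDerivAt g g' y) :
    g y + g' (x - y) ≤ g x := by
  let ℓ : ℝ →ᵃ[ℝ] E := AffineMap.lineMap y x
  have hgℓ : HasDerivAt (g ∘ ℓ) (g' (x - y)) 0 :=
    (by simpa [ℓ] using hg' : HasFDerivAt g g' (ℓ 0)).comp_hasDerivAt 0
      AffineMap.hasDerivAt_lineMap
  have := (hg.comp_affineMap ℓ).le_slope_of_hasDerivAt (x := 0) (y := 1) (by simpa [ℓ] using hy)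
    (by simpa [ℓ] using hx) one_pos hgℓ
  simp only [slope_def_field, Function.comp_apply, ℓ, AffineMap.lineMap_apply_zero,
    AffineMap.lineMap_apply_one, sub_zero, div_one] at this
  linarith

section Semiconcave

variable {E : Type*} [NormedAddCommGroup E] [InnerProductSpace ℝ E]

def SemiconcaveWith (C : ℝ) (f : E → ℝ) : Prop :=
  ConvexOn ℝ univ fun x => C * ‖x‖ ^ 2 / 2 - f x

variable [CompleteSpace E]

theorem SemiconcaveWith.le_add_inner_add {C : ℝ} {f : E → ℝ} {f' y : E}
    (hf : SemiconcaveWith C f) (hf' : HasGradientAt f f' y) (x : E) :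
    f x ≤ f y + inner ℝ f' (x - y) + C * ‖x - y‖ ^ 2 / 2 := by
  have hd := ((hasFDerivAt_id y).norm_sq.const_mul (C / 2)).sub hf'.hasFDerivAt
  have key := hf.add_apply_sub_le_of_hasFDerivAt (mem_univ x) (mem_univ y)
    (hd.congr_of_eventuallyEq (.of_forall fun z => by simp only [Pi.sub_apply, id]; ring))
  have hx : ‖x‖ ^ 2 = ‖y‖ ^ 2 + 2 * inner ℝ y (x - y) + ‖x - y‖ ^ 2 := by
    simpa using norm_add_sq_real y (x - y)
  simp only [id_eq, ContinuousLinearMap.comp_id, sub_apply, smul_apply,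
    coe_innerSL_apply, nsmul_eq_mul, Nat.cast_ofNat, smul_eq_mul,
    InnerProductSpace.toDual_apply_apply] at key
  rw [hx] at key
  linarith

theorem SemiconcaveWith.inner_sub_le {C : ℝ} {f g : E → ℝ} {f' g' a b : E}
    (hf : SemiconcaveWith C f) (hg : SemiconcaveWith C g)
    (hf' : HasGradientAt f f' a) (hg' : HasGradientAt g g' b) :
    inner ℝ (f' - g') (a - b) ≤ (f a - g a) - (f b - g b) + C * ‖a - b‖ ^ 2 := by
  have hfb := hf.le_add_inner_add hf' b
  have hga := hg.le_add_inner_add hg' a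
  rw [← neg_sub a b, inner_neg_right, norm_neg] at hfb
  rw [inner_sub_left]
  linarith

end Semiconcave

theorem le_gronwallBound_of_deriv_right_le {f f' : ℝ → ℝ} {δ K ε a b : ℝ}
    (hf : ContinuousOn f (Icc a b)) (hf' : ∀ x ∈ Ico a b, HasDerivWithinAt f (f' x) (Ici x) x)
    (ha : f a ≤ δ) (bound : ∀ x ∈ Ico a b, f' x ≤ K * f x + ε) :
    ∀ x ∈ Icc a b, f x ≤ gronwallBound δ K ε (x - a) :=
  le_gronwallBound_of_liminf_deriv_right_le hf
    (fun x hx _ hr => (hf' x hx).liminf_right_slope_le hr) ha bound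

theorem norm_sub_sq_le_gronwallBound_of_gradient_trajectories {E : Type*} [NormedAddCommGroup E]
    [InnerProductSpace ℝ E] [CompleteSpace E] {ψ φ : E → ℝ → ℝ} {y z : ℝ → E} {a b C ε : ℝ}
    (hψ : ∀ t ∈ Ico a b, SemiconcaveWith C (ψ · t))
    (hφ : ∀ t ∈ Ico a b, SemiconcaveWith C (φ · t))
    (hψ_diff : ∀ t ∈ Ico a b, DifferentiableAt ℝ (ψ · t) (y t))
    (hφ_diff : ∀ t ∈ Ico a b, DifferentiableAt ℝ (φ · t) (z t))
    (hclose : ∀ x, ∀ t ∈ Ico a b, |ψ x t - φ x t| ≤ ε)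
    (hy : ∀ t ∈ Icc a b, HasDerivAt y (gradient (ψ · t) (y t)) t)
    (hz : ∀ t ∈ Icc a b, HasDerivAt z (gradient (φ · t) (z t)) t) :
    ∀ t ∈ Icc a b, ‖y t - z t‖ ^ 2 ≤ gronwallBound (‖y a - z a‖ ^ 2) (2 * C) (4 * ε) (t - a) := by
  have hderiv : ∀ t ∈ Icc a b, HasDerivAt (fun s => ‖y s - z s‖ ^ 2)
      (2 * inner ℝ (y t - z t) (gradient (ψ · t) (y t) - gradient (φ · t) (z t))) t :=
    fun t ht => ((hy t ht).sub (hz t ht)).norm_sq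
  refine le_gronwallBound_of_deriv_right_le
    (fun t ht => (hderiv t ht).continuousAt.continuousWithinAt)
    (fun t ht => (hderiv t (Ico_subset_Icc_self ht)).hasDerivWithinAt) le_rfl fun t ht => ?_
  have hmono := (hψ t ht).inner_sub_le (hφ t ht) (hψ_diff t ht).hasGradientAt
    (hφ_diff t ht).hasGradientAt
  have hy_close := abs_le.1 (hclose (y t) t ht)
  have hz_close := abs_le.1 (hclose (z t) t ht)
  rw [real_inner_comm]
  linarith

theorem gronwall_stability_of_gradient_trajectories_general {d : ℕ}
    (T C ε α : ℝ) (hC : 0 < C)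
    (ψ ψstar : EuclideanSpace ℝ (Fin d) → ℝ → ℝ)
    (hψ_diff : ∀ t ∈ Set.Icc (0 : ℝ) T, ContDiff ℝ 1 (fun x => ψ x t))
    (hψstar_diff : ∀ t ∈ Set.Icc (0 : ℝ) T, ContDiff ℝ 1 (fun x => ψstar x t))
    (hψ_conv : ∀ t ∈ Set.Icc (0 : ℝ) T,
      ConvexOn ℝ Set.univ (fun x : EuclideanSpace ℝ (Fin d) => C * ‖x‖ ^ 2 / 2 - ψ x t))
    (hψstar_conv : ∀ t ∈ Set.Icc (0 : ℝ) T,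
      ConvexOn ℝ Set.univ (fun x : EuclideanSpace ℝ (Fin d) => C * ‖x‖ ^ 2 / 2 - ψstar x t))
    (hclose : ∀ (x : EuclideanSpace ℝ (Fin d)), ∀ t ∈ Set.Icc (0 : ℝ) T,
      |ψ x t - ψstar x t| < ε)
    (y ystar : ℝ → EuclideanSpace ℝ (Fin d))
    (hy : ∀ t ∈ Set.Icc (0 : ℝ) T, HasDerivAt y (gradient (fun x => ψ x t) (y t)) t)
    (hystar : ∀ t ∈ Set.Icc (0 : ℝ) T,
      HasDerivAt ystar (gradient (fun x => ψstar x t) (ystar t)) t)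
    (hinit : ‖y 0 - ystar 0‖ ^ 2 < α) :
    ∀ t ∈ Set.Icc (0 : ℝ) T,
      ‖y t - ystar t‖ ^ 2 < 2 * ε * (Real.exp (2 * C * t) - 1) / C
        + α * Real.exp (2 * C * t) := by
  intro t ht
  have hIco : Ico (0 : ℝ) T ⊆ Icc 0 T := Ico_subset_Icc_self
  have hbound := norm_sub_sq_le_gronwallBound_of_gradient_trajectories
    (fun s hs => hψ_conv s (hIco hs)) (fun s hs => hψstar_conv s (hIco hs))
    (fun s hs => (hψ_diff s (hIco hs)).differentiable one_ne_zero _)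
    (fun s hs => (hψstar_diff s (hIco hs)).differentiable one_ne_zero _)
    (fun x s hs => (hclose x s (hIco hs)).le) hy hystar t ht
  rw [sub_zero, gronwallBound_of_K_ne_0 (by positivity)] at hbound
  calc ‖y t - ystar t‖ ^ 2
      ≤ ‖y 0 - ystar 0‖ ^ 2 * exp (2 * C * t) + 4 * ε / (2 * C) * (exp (2 * C * t) - 1) :=
        hbound
    _ < α * exp (2 * C * t) + 4 * ε / (2 * C) * (exp (2 * C * t) - 1) := by gcongr
    _ = 2 * ε * (exp (2 * C * t) - 1) / C + α * exp (2 * C * t) := by field_simp; ring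

/-- **Gronwall-type stability of gradient trajectories.** Let `ψ, ψ*` be potentials on
`ℝ^d × [0,T]`, continuously differentiable in the space variable, with
`x ↦ C|x|²/2 − ψ(x,t)` and `x ↦ C|x|²/2 − ψ*(x,t)` convex for every `t ∈ [0,T]`, and
`|ψ − ψ*| < ε` on `ℝ^d × [0,T]`. If `y, y*` are trajectories of the gradient fields of `ψ, ψ*`
with `|y(0) − y*(0)|² < α`, then `|y(t) − y*(t)|² < 2ε(e^{2Ct} − 1)/C + α e^{2Ct}`
for all `t ∈ [0,T]`. -/
theorem gronwall_stability_of_gradient_trajectories {d : ℕ}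
    (T C ε α : ℝ) (hT : 0 < T) (hC : 0 < C) (hε : 0 < ε) (hα : 0 < α)
    (ψ ψstar : EuclideanSpace ℝ (Fin d) → ℝ → ℝ)
    (hψ_diff : ∀ t ∈ Set.Icc (0 : ℝ) T, ContDiff ℝ 1 (fun x => ψ x t))
    (hψstar_diff : ∀ t ∈ Set.Icc (0 : ℝ) T, ContDiff ℝ 1 (fun x => ψstar x t))
    (hψ_conv : ∀ t ∈ Set.Icc (0 : ℝ) T,
      ConvexOn ℝ Set.univ (fun x : EuclideanSpace ℝ (Fin d) => C * ‖x‖ ^ 2 / 2 - ψ x t))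
    (hψstar_conv : ∀ t ∈ Set.Icc (0 : ℝ) T,
      ConvexOn ℝ Set.univ (fun x : EuclideanSpace ℝ (Fin d) => C * ‖x‖ ^ 2 / 2 - ψstar x t))
    (hclose : ∀ (x : EuclideanSpace ℝ (Fin d)), ∀ t ∈ Set.Icc (0 : ℝ) T,
      |ψ x t - ψstar x t| < ε)
    (y ystar : ℝ → EuclideanSpace ℝ (Fin d))
    (hy : ∀ t ∈ Set.Icc (0 : ℝ) T, HasDerivAt y (gradient (fun x => ψ x t) (y t)) t)
    (hystar : ∀ t ∈ Set.Icc (0 : ℝ) T,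
      HasDerivAt ystar (gradient (fun x => ψstar x t) (ystar t)) t)
    (hinit : ‖y 0 - ystar 0‖ ^ 2 < α) :
    ∀ t ∈ Set.Icc (0 : ℝ) T,
      ‖y t - ystar t‖ ^ 2 < 2 * ε * (Real.exp (2 * C * t) - 1) / C
        + α * Real.exp (2 * C * t) :=
  gronwall_stability_of_gradient_trajectories_general T C ε α hC ψ ψstar hψ_diff hψstar_diff hψ_conv
    hψstar_conv hclose y ystar hy hystar hinit
end
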